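/- arXiv:0904.2282 — 4 statements merged into one kernel-verified Lean document; each statement's English description precedes it below -/
import Mathlib

section
/- For every positive integer k and every positive integer l, there exists an integer g such that every finite graph with tree-width at most k and odd-girth at least g admits a graph homomorphism to the cycle of length 2l+1. -/
open SimpleGraph

/-- `H` (a graph on `Fin n`) is a `k`-tree: there is a build order in which the first
`k+1` vertices form a clique and every later vertex has exactly `k` earlier neighbours,
which form a clique. -/
def IsKTree (k n : ℕ) (H : SimpleGraph (Fin n)) : Prop :=
  k + 1 ≤ n ∧
  (∀ i j : Fin n, i.val < k + 1 → j.val < k + 1 → i ≠ j → H.Adj i j) ∧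
  (∀ j : Fin n, k + 1 ≤ j.val →
    ∃ s : Finset (Fin n), s.card = k ∧ (∀ i ∈ s, i < j) ∧
      (∀ i : Fin n, i < j → (H.Adj i j ↔ i ∈ s)) ∧
      (∀ a ∈ s, ∀ b ∈ s, a ≠ b → H.Adj a b))

/-- `G` has tree-width at most `k`: it is a subgraph of some `k`-tree. -/
def TreewidthLE (k : ℕ) {V : Type} (G : SimpleGraph V) : Prop :=
  ∃ (n : ℕ) (H : SimpleGraph (Fin n)), IsKTree k n H ∧
    ∃ f : V ↪ Fin n, ∀ u v, G.Adj u v → H.Adj (f u) (f v)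

/-- `G`, with distinguished vertices `r 0, …, r k`, is a rooted partial `k`-tree:
`G` is a subgraph of a `k`-tree in which the distinguished vertices form a clique. -/
def IsRootedPartialKTree (k : ℕ) {V : Type} (G : SimpleGraph V) (r : Fin (k + 1) → V) : Prop :=
  ∃ (n : ℕ) (H : SimpleGraph (Fin n)), IsKTree k n H ∧
    ∃ f : V ↪ Fin n, (∀ u v, G.Adj u v → H.Adj (f u) (f v)) ∧
      ∀ i j : Fin (k + 1), i ≠ j → H.Adj (f (r i)) (f (r j))

/-- Adjacency in the disjoint union of two graphs. -/
def sumAdj {V₁ V₂ : Type} (G₁ : SimpleGraph V₁) (G₂ : SimpleGraph V₂) :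
    V₁ ⊕ V₂ → V₁ ⊕ V₂ → Prop
  | Sum.inl a, Sum.inl b => G₁.Adj a b
  | Sum.inr a, Sum.inr b => G₂.Adj a b
  | _, _ => False

lemma sumAdj_symm {V₁ V₂ : Type} (G₁ : SimpleGraph V₁) (G₂ : SimpleGraph V₂) :
    ∀ x y, sumAdj G₁ G₂ x y → sumAdj G₁ G₂ y x := by
  rintro (a | a) (b | b) h <;> simp only [sumAdj] at h ⊢ <;> exact h.symm

/-- Vertices of `G₁ ⊕ G₂`: the disjoint union with `r₁ i` identified with `r₂ i`. -/
def GlueVerts {V₁ V₂ : Type} {m : ℕ} (r₁ : Fin m → V₁) (r₂ : Fin m → V₂) : Type :=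
  Quot (fun x y : V₁ ⊕ V₂ => ∃ i, x = Sum.inl (r₁ i) ∧ y = Sum.inr (r₂ i))

/-- The graph `G₁ ⊕ G₂` obtained by identifying the roots of `G₁` and `G₂` pairwise. -/
def glue {V₁ V₂ : Type} {m : ℕ} (G₁ : SimpleGraph V₁) (G₂ : SimpleGraph V₂)
    (r₁ : Fin m → V₁) (r₂ : Fin m → V₂) : SimpleGraph (GlueVerts r₁ r₂) where
  Adj x y := x ≠ y ∧ ∃ a b, sumAdj G₁ G₂ a b ∧ Quot.mk _ a = x ∧ Quot.mk _ b = y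
  symm := by
    constructor
    rintro x y ⟨hxy, a, b, hab, ha, hb⟩
    exact ⟨hxy.symm, b, a, sumAdj_symm G₁ G₂ a b hab, hb, ha⟩
  loopless := ⟨fun x h => h.1 rfl⟩

/-- The roots of the glued graph `G₁ ⊕ G₂`. -/
def glueRoot {V₁ V₂ : Type} {m : ℕ} (r₁ : Fin m → V₁) (r₂ : Fin m → V₂) (i : Fin m) :
    GlueVerts r₁ r₂ :=
  Quot.mk _ (Sum.inl (r₁ i))

/-- `c` is a `(p,q)`-coloring of `G`: colors lie in `{0, …, p-1}` and the colors of
adjacent vertices `u`, `v` satisfy `q ≤ |c u - c v| ≤ p - q`. -/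
def IsPQColoring {V : Type} (G : SimpleGraph V) (p q : ℕ) (c : V → ℕ) : Prop :=
  (∀ v, c v < p) ∧ ∀ u v, G.Adj u v →
    (q : ℤ) ≤ |(c u : ℤ) - (c v : ℤ)| ∧ |(c u : ℤ) - (c v : ℤ)| ≤ (p : ℤ) - q

def HasPQColoring {V : Type} (G : SimpleGraph V) (p q : ℕ) : Prop :=
  ∃ c : V → ℕ, IsPQColoring G p q c

/-- The circular chromatic number of `G`: the infimum of the ratios `p/q` such that
`G` has a `(p,q)`-coloring. -/
noncomputable def circChromNum {V : Type} (G : SimpleGraph V) : ℝ :=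
  sInf {r : ℝ | ∃ p q : ℕ, 0 < q ∧ HasPQColoring G p q ∧ r = (p : ℝ) / (q : ℝ)}

/-- The type of a rooted graph: the matrix of distances between the roots. -/
noncomputable def typeOf {V : Type} {m : ℕ} (G : SimpleGraph V) (r : Fin m → V) :
    Fin m → Fin m → ℕ∞ :=
  fun i j => G.edist (r i) (r j)

/-- An abstract type: a symmetric matrix with entries in `ℕ∞`, zeroes exactly on the
diagonal, satisfying the triangle inequality. -/
def IsType {m : ℕ} (M : Fin m → Fin m → ℕ∞) : Prop :=
  (∀ i j, M i j = M j i) ∧ (∀ i j, M i j = 0 ↔ i = j) ∧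
    (∀ i j l, M i l ≤ M i j + M j l)

/-- A bipartite type: `M i j + M j l + M i l` is even whenever all three entries are finite. -/
def IsBipartiteType {m : ℕ} (M : Fin m → Fin m → ℕ∞) : Prop :=
  IsType M ∧ ∀ i j l, ∀ a b c : ℕ, M i j = a → M j l = b → M i l = c → Even (a + b + c)

/-- Two types are compatible if corresponding entries have the same parity whenever
both are finite. -/
def CompatibleTypes {m : ℕ} (M M' : Fin m → Fin m → ℕ∞) : Prop :=
  ∀ i j, ∀ a b : ℕ, M i j = a → M' i j = b → (Even a ↔ Even b)

/-- `M ⪯ M'`: the types are compatible and `M i j ≤ M' i j` entrywise. -/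
def TypeLE {m : ℕ} (M M' : Fin m → Fin m → ℕ∞) : Prop :=
  CompatibleTypes M M' ∧ ∀ i j, M i j ≤ M' i j

/-- A `p`-precoloring `c` of the roots extends to a `(p,q)`-coloring of `G`. -/
def PrecoloringExtends {V : Type} {m : ℕ} (G : SimpleGraph V) (r : Fin m → V)
    (p q : ℕ) (c : Fin m → ℕ) : Prop :=
  ∃ f : V → ℕ, IsPQColoring G p q f ∧ ∀ i, f (r i) = c i

/-!
Colour the vertices one at a time along an elimination order of a `k`-tree containing `G`,
with colours in `Fin N`, `N = 2l + 1`. Call `φ : V → ℤ` tight on `S` if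
`φ a - φ b ≤ dist a b` and `φ a - φ b ≡ dist a b [ZMOD 2]` on `S`. Along an edge a tight
function changes by exactly `±1`, so its reduction mod `N` is a homomorphism to `C_N`. The
invariant is that on every clique of the `k`-tree of `G`-diameter at most `R` the colouring is
the reduction of a tight function.

The earlier neighbours of a new vertex `v` within distance `R` are at most `k`. Among the
scales `N * 4 ^ j`, `j ≤ (k + 1) ^ 2`, the largest of which is `R`, there is one, `T`, such that
no distance among them and `v` lies in `(T, 4T]`, so they fall into clusters of diameter `≤ T`
more than `4T` apart. On the cluster of `v` the tight lift extends to `v` (Helly's theorem on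
the line); the lift of every other cluster is shifted by a multiple of `N` to within `2T` of the
value at `v`; the gaps make the glued function tight. Odd girth above `4R` supplies all the
parity conditions: three distances with sum at most `4R` close up to a closed walk, which must
be even.
-/

open Fin.CommRing

theorem exists_dvd_abs_add_le_of_odd {N : ℕ} (hN : Odd N) (z p : ℤ) :
    ∃ c : ℤ, (N : ℤ) ∣ c ∧ |z + c| ≤ N ∧ 2 ∣ z + c - p := by
  have hN0 : (0 : ℤ) < N := by exact_mod_cast hN.pos
  have hdiv := Int.emod_add_mul_ediv z N
  have h0 := Int.emod_nonneg z hN0.ne'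
  have h1 := Int.emod_lt_of_pos z hN0
  obtain ⟨m, hm⟩ := hN
  -- `z + c` is `z % N` or `z % N - N`; as `N` is odd, one of the two has the parity of `p`.
  by_cases hr : 2 ∣ z % N - p
  · refine ⟨-(N * (z / N)), ⟨-(z / N), by ring⟩, abs_le.2 ⟨by linarith, by linarith⟩, by omega⟩
  · refine ⟨-(N * (z / N)) - N, ⟨-(z / N) - 1, by ring⟩, abs_le.2 ⟨by linarith, by linarith⟩,
      by omega⟩

theorem Monotone.exists_gap {t : ℕ → ℕ} (ht : Monotone t) (X : Finset ℕ) :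
    ∃ j ≤ X.card, ∀ x ∈ X, x ≤ t j ∨ t (j + 1) < x := by
  by_contra! hX
  choose! x hxX hx using hX
  have hinj : Set.InjOn x (Finset.range (X.card + 1)) := by
    intro i hi j hj hij
    have hi' := hx i (Nat.lt_succ_iff.1 (Finset.mem_range.1 hi))
    have hj' := hx j (Nat.lt_succ_iff.1 (Finset.mem_range.1 hj))
    rw [hij] at hi'
    by_contra hne
    rcases Nat.lt_or_gt_of_ne hne with h | h
    · have := ht (show i + 1 ≤ j by omega)
      omega
    · have := ht (show j + 1 ≤ i by omega)
      omega
  have := Finset.card_le_card_of_injOn x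
    (fun j hj => hxX j (Nat.lt_succ_iff.1 (Finset.mem_range.1 hj))) hinj
  simp at this

namespace SimpleGraph

variable {V : Type*} {G H : SimpleGraph V}

namespace Walk

lemma exists_split_of_not_isPath [DecidableEq V] {u v : V} (p : G.Walk u v) (hp : ¬p.IsPath) :
    ∃ (x : V) (c : G.Walk x x) (q : G.Walk u v), 0 < c.length ∧ c.length + q.length = p.length := by
  induction p with
  | nil => exact absurd IsPath.nil hp
  | @cons u a v h p ih =>
    by_cases hu : u ∈ p.support
    · refine ⟨u, cons h (p.takeUntil u hu), p.dropUntil u hu, by simp, ?_⟩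
      have := congrArg length (p.take_spec hu)
      simp only [length_append] at this
      simp only [length_cons]
      omega
    · obtain ⟨x, c, q, hc, hlen⟩ := ih fun hp' => hp ((cons_isPath_iff h p).2 ⟨hp', hu⟩)
      exact ⟨x, c, cons h q, hc, by simp only [length_cons]; omega⟩

lemma exists_isCycle_odd_length_le {u : V} (w : G.Walk u u) (hw : Odd w.length) :
    ∃ (x : V) (c : G.Walk x x), c.IsCycle ∧ Odd c.length ∧ c.length ≤ w.length := by
  classical
  induction hn : w.length using Nat.strong_induction_on generalizing u with
  | _ n ih =>
  subst hn
  cases w with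
  | nil => simp at hw
  | cons h p =>
    by_cases hp : p.IsPath
    · have hp0 : p.length ≠ 0 := fun h0 => h.ne (eq_of_length_eq_zero h0).symm
      refine ⟨u, cons h p, isCycle_iff_isPath_tail_and_le_length.2 ⟨by simpa using hp, ?_⟩,
        hw, le_rfl⟩
      rw [length_cons] at hw ⊢
      rcases hw with ⟨m, hm⟩
      omega
    · obtain ⟨x, c, q, hc, hlen⟩ := exists_split_of_not_isPath p hp
      have hsplit : (cons h q).length + c.length = (cons h p).length := by
        simp only [length_cons]
        omega
      have hodd : Odd (cons h q).length ∨ Odd c.length := by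
        simp only [Nat.odd_iff] at hw ⊢
        omega
      rcases hodd with hodd | hodd
      · obtain ⟨y, C, hC, hCodd, hCle⟩ := ih _ (by omega) (cons h q) hodd rfl
        exact ⟨y, C, hC, hCodd, by omega⟩
      · obtain ⟨y, C, hC, hCodd, hCle⟩ := ih _ (by simp only [length_cons]; omega) c hodd rfl
        exact ⟨y, C, hC, hCodd, by omega⟩

end Walk

lemma two_dvd_dist_add_dist_add_dist {g : ℕ}
    (hg : ∀ (u : V) (w : G.Walk u u), w.IsCycle → Odd w.length → g ≤ w.length)
    {a b c : V} (hab : G.Reachable a b) (hbc : G.Reachable b c)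
    (hlt : G.dist a b + G.dist b c + G.dist c a < g) :
    2 ∣ G.dist a b + G.dist b c + G.dist c a := by
  obtain ⟨p, hp⟩ := hab.exists_walk_length_eq_dist
  obtain ⟨q, hq⟩ := hbc.exists_walk_length_eq_dist
  obtain ⟨r, hr⟩ := (hab.trans hbc).symm.exists_walk_length_eq_dist
  by_contra hodd
  obtain ⟨x, C, hC, hCodd, hClen⟩ := (p.append (q.append r)).exists_isCycle_odd_length_le (by
    rw [Nat.odd_iff]
    simp only [Walk.length_append]
    omega)
  have := hg x C hC hCodd
  simp only [Walk.length_append] at hClen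
  omega

lemma edist_le_natCast_iff {a b : V} {n : ℕ} :
    G.edist a b ≤ n ↔ G.Reachable a b ∧ G.dist a b ≤ n := by
  refine ⟨fun h => ?_, fun ⟨hr, h⟩ => ?_⟩
  · have hr : G.Reachable a b := edist_ne_top_iff_reachable.1 (ne_top_of_le_ne_top (by simp) h)
    exact ⟨hr, by rwa [← hr.coe_dist_eq_edist, Nat.cast_le] at h⟩
  · rwa [← hr.coe_dist_eq_edist, Nat.cast_le]

def IsTightOn (G : SimpleGraph V) (S : Finset V) (φ : V → ℤ) : Prop :=
  ∀ a ∈ S, ∀ b ∈ S, φ a - φ b ≤ G.dist a b ∧ 2 ∣ φ a - φ b - G.dist a b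

lemma IsTightOn.mono {S S' : Finset V} {φ : V → ℤ} (hφ : G.IsTightOn S φ) (h : S' ⊆ S) :
    G.IsTightOn S' φ :=
  fun a ha b hb => hφ a (h ha) b (h hb)

lemma cycleGraph_adj_intCast {N : ℕ} [NeZero N] (hN : 2 ≤ N) {a b : ℤ}
    (h : a - b = 1 ∨ b - a = 1) : (cycleGraph N).Adj (a : Fin N) (b : Fin N) := by
  have h1 : (1 : Fin N).val = 1 := by
    rw [Fin.val_one']
    exact Nat.mod_eq_of_lt hN
  rw [cycleGraph_adj', ← Int.cast_sub, ← Int.cast_sub]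
  rcases h with h | h
  · exact Or.inl (by rw [h, Int.cast_one, h1])
  · exact Or.inr (by rw [h, Int.cast_one, h1])

lemma IsTightOn.cycleGraph_adj {N : ℕ} [NeZero N] (hN : 2 ≤ N) {S : Finset V} {φ : V → ℤ}
    (hφ : G.IsTightOn S φ) {a b : V} (ha : a ∈ S) (hb : b ∈ S) (hab : G.Adj a b) :
    (cycleGraph N).Adj (φ a : Fin N) (φ b : Fin N) := by
  have h1 := hφ a ha b hb
  have h2 := hφ b hb a ha
  rw [dist_eq_one_iff_adj.2 hab] at h1
  rw [dist_eq_one_iff_adj.2 hab.symm] at h2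
  exact cycleGraph_adj_intCast hN (by omega)

lemma IsTightOn.exists_update [DecidableEq V] {K : Finset V} {φ : V → ℤ} {v : V}
    (hφ : G.IsTightOn K φ) (hv : v ∉ K) (hreach : ∀ a ∈ K, G.Reachable a v)
    (hpar : ∀ a ∈ K, ∀ b ∈ K, 2 ∣ G.dist a b + G.dist a v + G.dist b v) :
    ∃ y : ℤ, G.IsTightOn (insert v K) (Function.update φ v y) := by
  rcases K.eq_empty_or_nonempty with rfl | hK
  · exact ⟨0, fun a ha b hb => by simp_all⟩
  -- The largest lower bound `φ z - dist z v` lies below every upper bound `φ u + dist u v`.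
  obtain ⟨z, hz, hmax⟩ := K.exists_max_image (fun u => φ u - G.dist u v) hK
  have hy : ∀ u ∈ K, φ u - (φ z - G.dist z v) ≤ G.dist u v ∧
      φ z - G.dist z v - φ u ≤ G.dist u v ∧ 2 ∣ φ z - G.dist z v - φ u - G.dist u v := by
    intro u hu
    have hzu := hφ z hz u hu
    have htri := (hreach z hz).dist_triangle_left u
    have := hpar z hz u hu
    rw [dist_comm (u := v)] at htri
    have := hmax u hu
    exact ⟨by omega, by omega, by omega⟩
  have hupd : ∀ u ∈ K, Function.update φ v (φ z - G.dist z v) u = φ u :=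
    fun u hu => Function.update_of_ne (by rintro rfl; exact hv hu) _ _
  refine ⟨φ z - G.dist z v, fun a ha b hb => ?_⟩
  rcases Finset.mem_insert.1 ha with ha | ha <;> rcases Finset.mem_insert.1 hb with hb | hb
  · simp [ha, hb]
  · have := hy b hb
    rw [ha, Function.update_self, hupd b hb, dist_comm (u := v)]
    omega
  · have := hy a ha
    rw [hb, Function.update_self, hupd a ha]
    omega
  · rw [hupd a ha, hupd b hb]
    exact hφ a ha b hb

lemma IsTightOn.exists_shift {C : Finset V} {φ : V → ℤ} {N T : ℕ} (hφ : G.IsTightOn C φ)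
    (hN : Odd N) (y : ℤ) (v : V) (hT : ∀ a ∈ C, ∀ b ∈ C, G.dist a b ≤ T)
    (hpar : ∀ a ∈ C, ∀ b ∈ C, 2 ∣ G.dist a b + G.dist a v + G.dist b v) :
    ∃ c : ℤ, (N : ℤ) ∣ c ∧ ∀ u ∈ C, |φ u + c - y| ≤ T + N ∧ 2 ∣ φ u + c - y - G.dist u v := by
  rcases C.eq_empty_or_nonempty with rfl | ⟨a, ha⟩
  · exact ⟨0, dvd_zero _, by simp⟩
  obtain ⟨c, hcN, hca, hcpar⟩ := exists_dvd_abs_add_le_of_odd hN (φ a - y) (G.dist a v)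
  refine ⟨c, hcN, fun u hu => ?_⟩
  have hua := hφ u hu a ha
  have hau := hφ a ha u hu
  have := hT u hu a ha
  have := hpar u hu a ha
  rw [dist_comm (u := a)] at hau
  rw [abs_le] at hca ⊢
  exact ⟨⟨by omega, by omega⟩, by omega⟩

lemma isTightOn_of_gap {B : Finset V} {φ : V → ℤ} {v : V} {T : ℕ}
    (hgap : ∀ a ∈ B, ∀ b ∈ B, G.dist a b ≤ T ∨ 4 * T < G.dist a b)
    (hpar : ∀ a ∈ B, ∀ b ∈ B, 2 ∣ G.dist a b + G.dist a v + G.dist b v)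
    (hnear : ∀ a ∈ B, ∀ b ∈ B, G.dist a b ≤ T → φ a - φ b ≤ G.dist a b)
    (hcenter : ∀ a ∈ B, |φ a - φ v| ≤ 2 * T ∧ 2 ∣ φ a - φ v - G.dist a v) :
    G.IsTightOn B φ := by
  intro a ha b hb
  obtain ⟨hav, hapar⟩ := hcenter a ha
  obtain ⟨hbv, hbpar⟩ := hcenter b hb
  rw [abs_le] at hav hbv
  have := hpar a ha b hb
  refine ⟨?_, by omega⟩
  rcases hgap a ha b hb with h | h
  · exact hnear a ha b hb h
  · omega

lemma exists_scale_gap (d : V → V → ℕ) (B : Finset V) (N m : ℕ) (hB : B.card ≤ m) :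
    ∃ T, N ≤ T ∧ T ≤ N * 4 ^ (m ^ 2) ∧ ∀ a ∈ B, ∀ b ∈ B, d a b ≤ T ∨ 4 * T < d a b := by
  set X := (B ×ˢ B).image fun p => d p.1 p.2
  have hX : X.card ≤ m ^ 2 := by
    calc X.card ≤ (B ×ˢ B).card := Finset.card_image_le
      _ = B.card ^ 2 := by rw [Finset.card_product, sq]
      _ ≤ m ^ 2 := Nat.pow_le_pow_left hB 2
  have hmono : Monotone fun j => N * 4 ^ j :=
    fun i j h => Nat.mul_le_mul_left N (Nat.pow_le_pow_right (by norm_num) h)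
  obtain ⟨j, hj, hgap⟩ := hmono.exists_gap X
  refine ⟨N * 4 ^ j, Nat.le_mul_of_pos_right N (by positivity), hmono (hj.trans hX),
    fun a ha b hb => ?_⟩
  have := hgap _ (Finset.mem_image_of_mem _ (Finset.mk_mem_product ha hb))
  rwa [pow_succ, ← mul_assoc, mul_comm _ 4] at this

lemma dist_le_of_gap {B : Finset V} {v : V} {T : ℕ} (hreach : ∀ a ∈ B, G.Reachable a v)
    (hgap : ∀ a ∈ B, ∀ b ∈ B, G.dist a b ≤ T ∨ 4 * T < G.dist a b) ⦃a b c : V⦄ (ha : a ∈ B)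
    (hb : b ∈ B) (hc : c ∈ B) (hab : G.dist a b ≤ T) (hbc : G.dist b c ≤ T) :
    G.dist a c ≤ T := by
  have := ((hreach a ha).trans (hreach b hb).symm).dist_triangle_left c
  have := hgap a ha c hc
  omega

lemma isTightOn_piecewise {B : Finset V} {v : V} {T : ℕ} {μ ψ : V → ℤ} (hv : v ∈ B)
    (hreach : ∀ a ∈ B, G.Reachable a v)
    (hgap : ∀ a ∈ B, ∀ b ∈ B, G.dist a b ≤ T ∨ 4 * T < G.dist a b)
    (hpar : ∀ a ∈ B, ∀ b ∈ B, 2 ∣ G.dist a b + G.dist a v + G.dist b v)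
    (hμ : G.IsTightOn (B.filter fun a => G.dist a v ≤ T) μ)
    (hψ : ∀ a ∈ B, ¬G.dist a v ≤ T → |ψ a - μ v| ≤ 2 * T ∧ 2 ∣ ψ a - μ v - G.dist a v ∧
      ∀ b ∈ B, ¬G.dist b v ≤ T → G.dist a b ≤ T → ψ a - ψ b ≤ G.dist a b) :
    G.IsTightOn B fun a => if G.dist a v ≤ T then μ a else ψ a := by
  have hvv : G.dist v v ≤ T := by simp
  have hvK : v ∈ B.filter fun a => G.dist a v ≤ T := Finset.mem_filter.2 ⟨hv, hvv⟩
  refine isTightOn_of_gap hgap hpar (fun a ha b hb hab => ?_) (fun a ha => ?_)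
  · by_cases hav : G.dist a v ≤ T
    · have hbv := dist_le_of_gap hreach hgap hb ha hv (dist_comm.trans_le hab) hav
      simp only [if_pos hav, if_pos hbv]
      exact (hμ a (Finset.mem_filter.2 ⟨ha, hav⟩) b (Finset.mem_filter.2 ⟨hb, hbv⟩)).1
    · have hbv : ¬G.dist b v ≤ T := fun hbv => hav (dist_le_of_gap hreach hgap ha hb hv hab hbv)
      simp only [if_neg hav, if_neg hbv]
      exact (hψ a ha hav).2.2 b hb hbv hab
  · simp only [if_pos hvv]
    by_cases hav : G.dist a v ≤ T
    · have h1 := hμ a (Finset.mem_filter.2 ⟨ha, hav⟩) v hvK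
      have h2 := hμ v hvK a (Finset.mem_filter.2 ⟨ha, hav⟩)
      rw [dist_comm (u := v)] at h2
      simp only [if_pos hav, abs_le]
      exact ⟨⟨by omega, by omega⟩, by omega⟩
    · simp only [if_neg hav]
      exact ⟨(hψ a ha hav).1, (hψ a ha hav).2.1⟩

section Lift

variable {N T : ℕ} [NeZero N] {f : V → Fin N}

lemma exists_clusterwise_lift (hN : Odd N) (hNT : N ≤ T) {v : V} {A : Finset V} (y : ℤ)
    (hclose : ∀ a ∈ A, ∀ b ∈ A, ∀ c ∈ A, G.dist a b ≤ T → G.dist b c ≤ T → G.dist a c ≤ T)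
    (hpar : ∀ a ∈ A, ∀ b ∈ A, 2 ∣ G.dist a b + G.dist a v + G.dist b v)
    (Λ : Finset V → V → ℤ)
    (hΛ : ∀ C ⊆ A, (∀ a ∈ C, ∀ b ∈ C, G.dist a b ≤ T) →
      G.IsTightOn C (Λ C) ∧ ∀ u ∈ C, (Λ C u : Fin N) = f u) :
    ∃ ψ : V → ℤ, ∀ a ∈ A, (ψ a : Fin N) = f a ∧ |ψ a - y| ≤ 2 * T ∧
      2 ∣ ψ a - y - G.dist a v ∧ ∀ b ∈ A, G.dist a b ≤ T → ψ a - ψ b ≤ G.dist a b := by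
  set cl : V → Finset V := fun u => A.filter fun w => G.dist u w ≤ T
  have hclA : ∀ u, cl u ⊆ A := fun u => Finset.filter_subset _ _
  have hmem : ∀ u ∈ A, u ∈ cl u := fun u hu => Finset.mem_filter.2 ⟨hu, by simp⟩
  have hdiam : ∀ u ∈ A, ∀ a ∈ cl u, ∀ b ∈ cl u, G.dist a b ≤ T := by
    intro u hu a ha b hb
    rw [Finset.mem_filter, dist_comm] at ha
    rw [Finset.mem_filter] at hb
    exact hclose a ha.1 u hu b hb.1 ha.2 hb.2
  have hcl_eq : ∀ a ∈ A, ∀ b ∈ A, G.dist a b ≤ T → cl a = cl b := by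
    intro a ha b hb hab
    ext w
    simp only [cl, Finset.mem_filter, and_congr_right_iff]
    intro hw
    exact ⟨hclose b hb a ha w hw (dist_comm.trans_le hab), hclose a ha b hb w hw hab⟩
  have hshift : ∀ C : Finset V, ∃ c : ℤ, (N : ℤ) ∣ c ∧
      (C ⊆ A → (∀ a ∈ C, ∀ b ∈ C, G.dist a b ≤ T) →
        ∀ u ∈ C, |Λ C u + c - y| ≤ T + N ∧ 2 ∣ Λ C u + c - y - G.dist u v) := by
    intro C
    by_cases hC : C ⊆ A ∧ ∀ a ∈ C, ∀ b ∈ C, G.dist a b ≤ T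
    · obtain ⟨c, hcN, hc⟩ := (hΛ C hC.1 hC.2).1.exists_shift hN y v hC.2
        fun a ha b hb => hpar a (hC.1 ha) b (hC.1 hb)
      exact ⟨c, hcN, fun _ _ => hc⟩
    · exact ⟨0, dvd_zero _, fun h1 h2 => absurd ⟨h1, h2⟩ hC⟩
  choose c hcN hc using hshift
  refine ⟨fun u => Λ (cl u) u + c (cl u), fun a ha => ⟨?_, ?_, ?_, fun b hb hab => ?_⟩⟩
  · rw [Int.cast_add, (CharP.intCast_eq_zero_iff (Fin N) N _).2 (hcN _), add_zero]
    exact (hΛ _ (hclA a) (hdiam a ha)).2 a (hmem a ha)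
  · have := (hc _ (hclA a) (hdiam a ha) a (hmem a ha)).1
    rw [abs_le] at this ⊢
    constructor <;> linarith
  · exact (hc _ (hclA a) (hdiam a ha) a (hmem a ha)).2
  · have := (hΛ _ (hclA a) (hdiam a ha)).1 a (hmem a ha) b (hcl_eq a ha b hb hab ▸ hmem b hb)
    simp only [hcl_eq a ha b hb hab] at this ⊢
    linarith

theorem exists_isTightOn_insert [DecidableEq V] (hN : Odd N) (hNT : N ≤ T) {v : V}
    {A : Finset V} (hvA : v ∉ A) (hreach : ∀ a ∈ A, G.Reachable a v)
    (hgap : ∀ a ∈ insert v A, ∀ b ∈ insert v A, G.dist a b ≤ T ∨ 4 * T < G.dist a b)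
    (hpar : ∀ a ∈ insert v A, ∀ b ∈ insert v A, 2 ∣ G.dist a b + G.dist a v + G.dist b v)
    (Λ : Finset V → V → ℤ)
    (hΛ : ∀ C ⊆ A, (∀ a ∈ C, ∀ b ∈ C, G.dist a b ≤ T) →
      G.IsTightOn C (Λ C) ∧ ∀ u ∈ C, (Λ C u : Fin N) = f u) :
    ∃ φ : V → ℤ, G.IsTightOn (insert v A) φ ∧ ∀ u ∈ A, (φ u : Fin N) = f u := by
  have hv : v ∈ insert v A := Finset.mem_insert_self v A
  have hA : ∀ a ∈ A, a ∈ insert v A := fun a => Finset.mem_insert_of_mem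
  have hreach' : ∀ a ∈ insert v A, G.Reachable a v := by simpa using hreach
  have hclose := dist_le_of_gap hreach' hgap
  have hfar : ∀ a ∈ insert v A, ¬G.dist a v ≤ T → a ∈ A := fun a ha hav =>
    (Finset.mem_insert.1 ha).resolve_left fun h => hav (by simp [h])
  set K := A.filter fun u => G.dist u v ≤ T
  have hKA : K ⊆ A := Finset.filter_subset _ _
  obtain ⟨hKtight, hKf⟩ := hΛ K hKA fun a ha b hb => hclose (hA a (hKA ha)) hv (hA b (hKA hb))
    (Finset.mem_filter.1 ha).2 (dist_comm.trans_le (Finset.mem_filter.1 hb).2)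
  obtain ⟨y, hy⟩ := hKtight.exists_update (fun h => hvA (hKA h)) (fun a ha => hreach a (hKA ha))
    fun a ha b hb => hpar a (hA a (hKA ha)) b (hA b (hKA hb))
  obtain ⟨ψ, hψ⟩ := exists_clusterwise_lift (f := f) hN hNT y
    (fun a ha b hb c hc => hclose (hA a ha) (hA b hb) (hA c hc))
    (fun a ha b hb => hpar a (hA a ha) b (hA b hb)) Λ hΛ
  have hyv : Function.update (Λ K) v y v = y := Function.update_self ..
  refine ⟨_, isTightOn_piecewise (ψ := ψ) hv hreach' hgap hpar (hy.mono fun a ha => ?_)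
    (fun a ha hav => ?_), fun u hu => ?_⟩
  · obtain ⟨ha, hav⟩ := Finset.mem_filter.1 ha
    rcases Finset.mem_insert.1 ha with rfl | ha
    · exact Finset.mem_insert_self _ _
    · exact Finset.mem_insert_of_mem (Finset.mem_filter.2 ⟨ha, hav⟩)
  · obtain ⟨-, hbound, hparity, hnear⟩ := hψ a (hfar a ha hav)
    rw [hyv]
    exact ⟨hbound, hparity, fun b hb hbv => hnear b (hfar b hb hbv)⟩
  · by_cases huv : G.dist u v ≤ T
    · rw [if_pos huv, Function.update_of_ne (by rintro rfl; exact hvA hu)]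
      exact hKf u (Finset.mem_filter.2 ⟨hu, huv⟩)
    · rw [if_neg huv]
      exact (hψ u hu).1

end Lift

/-- Read backwards, the order is a perfect elimination ordering of `H` in which every vertex
has at most `k` earlier neighbours. -/
def EliminationWidthLE [LinearOrder V] (H : SimpleGraph V) (k : ℕ) : Prop :=
  ∀ v, ∃ s : Finset V, s.card ≤ k ∧ H.IsClique (s : Set V) ∧ ∀ u < v, H.Adj u v → u ∈ s

lemma EliminationWidthLE.comap {W : Type*} [LinearOrder V] [LinearOrder W] {H : SimpleGraph W}
    {k : ℕ} (hH : H.EliminationWidthLE k) (e : V ↪o W) : (H.comap e).EliminationWidthLE k := by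
  intro v
  obtain ⟨s, hcard, hclique, hs⟩ := hH (e v)
  refine ⟨s.preimage e e.injective.injOn, ?_, fun a ha b hb hab => ?_, fun u huv hadj => ?_⟩
  · exact (Finset.card_le_card_of_injOn e (fun a ha => by simpa using ha)
      e.injective.injOn).trans hcard
  · exact hclique (by simpa using ha) (by simpa using hb) (e.injective.ne hab)
  · exact Finset.mem_preimage.2 (hs _ (e.lt_iff_lt.2 huv) hadj)

def IsLiftableColoringOn (G H : SimpleGraph V) (N R : ℕ) [NeZero N] (D : Finset V)
    (f : V → Fin N) : Prop :=
  ∃ Λ : Finset V → V → ℤ, ∀ S ⊆ D, H.IsClique (S : Set V) →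
    (∀ a ∈ S, ∀ b ∈ S, G.edist a b ≤ R) → G.IsTightOn S (Λ S) ∧ ∀ u ∈ S, (Λ S u : Fin N) = f u

section Coloring

variable {N R : ℕ} [NeZero N]

lemma IsLiftableColoringOn.cycleGraph_adj {D : Finset V} {f : V → Fin N}
    (hf : IsLiftableColoringOn G H N R D f) (hGH : G ≤ H) (hN : 2 ≤ N) (hR : 1 ≤ R) {a b : V}
    (ha : a ∈ D) (hb : b ∈ D) (hab : G.Adj a b) : (cycleGraph N).Adj (f a) (f b) := by
  classical
  obtain ⟨Λ, hΛ⟩ := hf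
  have hdiam : ∀ x ∈ ({a, b} : Finset V), ∀ y ∈ ({a, b} : Finset V), G.edist x y ≤ R := by
    have h1 : (1 : ℕ∞) ≤ R := by exact_mod_cast hR
    simp only [Finset.mem_insert, Finset.mem_singleton]
    rintro x (rfl | rfl) y (rfl | rfl)
    exacts [by simp, (edist_le_one_iff_adj_or_eq.2 (Or.inl hab)).trans h1,
      (edist_le_one_iff_adj_or_eq.2 (Or.inl hab.symm)).trans h1, by simp]
  obtain ⟨htight, hcol⟩ := hΛ {a, b} (Finset.insert_subset ha (Finset.singleton_subset_iff.2 hb))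
    (by rw [Finset.coe_pair]; exact isClique_pair.2 fun _ => hGH hab) hdiam
  rw [← hcol a (by simp), ← hcol b (by simp)]
  exact htight.cycleGraph_adj hN (by simp) (by simp) hab

lemma IsLiftableColoringOn.insert_of_isTightOn [DecidableEq V] {D A : Finset V}
    {f : V → Fin N} {v : V} {φ : V → ℤ} (hf : IsLiftableColoringOn G H N R D f) (hvD : v ∉ D)
    (hAD : A ⊆ D) (hA : ∀ u ∈ D, H.Adj u v → G.edist u v ≤ R → u ∈ A)
    (hφ : G.IsTightOn (insert v A) φ) (hφf : ∀ u ∈ A, (φ u : Fin N) = f u) :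
    IsLiftableColoringOn G H N R (insert v D) (Function.update f v (φ v)) := by
  obtain ⟨Λ, hΛ⟩ := hf
  have hfD : ∀ u ∈ D, Function.update f v (φ v) u = f u :=
    fun u hu => Function.update_of_ne (by rintro rfl; exact hvD hu) _ _
  refine ⟨fun S => if v ∈ S then φ else Λ S, fun S hS hclique hSR => ?_⟩
  by_cases hvS : v ∈ S
  · have hSA : S ⊆ insert v A := by
      intro u hu
      rcases Finset.mem_insert.1 (hS hu) with huv | huD
      · exact huv ▸ Finset.mem_insert_self v A
      · exact Finset.mem_insert_of_mem (hA u huD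
          (hclique hu hvS fun h => hvD (h ▸ huD)) (hSR u hu v hvS))
    simp only [if_pos hvS]
    refine ⟨hφ.mono hSA, fun u hu => ?_⟩
    rcases Finset.mem_insert.1 (hSA hu) with huv | huA
    · rw [huv, Function.update_self]
    · rw [hfD u (hAD huA), hφf u huA]
  · have hSD : S ⊆ D := fun u hu => (Finset.mem_insert.1 (hS hu)).resolve_left
      (by rintro rfl; exact hvS hu)
    simp only [if_neg hvS]
    obtain ⟨hS1, hS2⟩ := hΛ S hSD hclique hSR
    exact ⟨hS1, fun u hu => (hS2 u hu).trans (hfD u (hSD hu)).symm⟩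

lemma IsLiftableColoringOn.exists_insert [LinearOrder V] {D : Finset V} {f : V → Fin N} {v : V}
    {k : ℕ} (hf : IsLiftableColoringOn G H N R D f) (hDv : ∀ x ∈ D, x < v)
    (hH : H.EliminationWidthLE k) (hN : Odd N) (hR : N * 4 ^ ((k + 1) ^ 2) ≤ R)
    (hg : ∀ (u : V) (w : G.Walk u u), w.IsCycle → Odd w.length → 4 * R + 1 ≤ w.length) :
    ∃ f', IsLiftableColoringOn G H N R (insert v D) f' := by
  classical
  obtain ⟨s, hscard, hclique, hs⟩ := hH v
  set A := s.filter fun u => u ∈ D ∧ G.edist u v ≤ R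
  have hAv : ∀ a ∈ A, a ∈ s ∧ a ∈ D ∧ G.Reachable a v ∧ G.dist a v ≤ R := by
    intro a ha
    obtain ⟨has, haD, haR⟩ := Finset.mem_filter.1 ha
    exact ⟨has, haD, edist_le_natCast_iff.1 haR⟩
  have hvD : v ∉ D := fun h => lt_irrefl v (hDv v h)
  have hreach : ∀ a ∈ insert v A, G.Reachable a v :=
    (Finset.forall_mem_insert ..).2 ⟨Reachable.refl v, fun a ha => (hAv a ha).2.2.1⟩
  have hdist : ∀ a ∈ insert v A, G.dist a v ≤ R :=
    (Finset.forall_mem_insert ..).2 ⟨by simp, fun a ha => (hAv a ha).2.2.2⟩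
  have hcard : (insert v A).card ≤ k + 1 :=
    (Finset.card_insert_le _ _).trans (Nat.succ_le_succ ((Finset.card_filter_le _ _).trans hscard))
  obtain ⟨T, hNT, hTmax, hgap⟩ := exists_scale_gap G.dist (insert v A) N (k + 1) hcard
  have hTR : T ≤ R := hTmax.trans hR
  have hpar : ∀ a ∈ insert v A, ∀ b ∈ insert v A,
      2 ∣ G.dist a b + G.dist a v + G.dist b v := by
    intro a ha b hb
    have htri := (hreach a ha).dist_triangle_left b
    have hav := hdist a ha
    have hbv := hdist b hb
    rw [dist_comm (u := v)] at htri
    have := two_dvd_dist_add_dist_add_dist hg ((hreach a ha).trans (hreach b hb).symm)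
      (hreach b hb) (by rw [dist_comm (u := v)]; omega)
    rwa [dist_comm (u := v), add_right_comm] at this
  have ⟨Λ, hΛ⟩ := hf
  obtain ⟨φ, hφ, hφf⟩ := exists_isTightOn_insert (f := f) hN hNT (fun h => hvD (hAv v h).2.1)
    (fun a ha => hreach a (Finset.mem_insert_of_mem ha)) hgap hpar Λ fun C hCA hCT => hΛ C
      (fun u hu => (hAv u (hCA hu)).2.1) (hclique.subset fun u hu => (hAv u (hCA hu)).1)
      fun a ha b hb => edist_le_natCast_iff.2 ⟨((hAv a (hCA ha)).2.2.1.trans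
        (hAv b (hCA hb)).2.2.1.symm), (hCT a ha b hb).trans hTR⟩
  exact ⟨_, hf.insert_of_isTightOn hvD (fun u hu => (hAv u hu).2.1)
    (fun u hu huv huR => Finset.mem_filter.2 ⟨hs u (hDv u hu) huv, hu, huR⟩) hφ hφf⟩

theorem exists_isLiftableColoringOn [LinearOrder V] {k : ℕ} (hH : H.EliminationWidthLE k)
    (hN : Odd N) (hR : N * 4 ^ ((k + 1) ^ 2) ≤ R)
    (hg : ∀ (u : V) (w : G.Walk u u), w.IsCycle → Odd w.length → 4 * R + 1 ≤ w.length)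
    (D : Finset V) : ∃ f, IsLiftableColoringOn G H N R D f := by
  classical
  induction D using Finset.induction_on_max with
  | empty =>
    refine ⟨fun _ => 0, fun _ _ => 0, fun S hS _ _ => ?_⟩
    rw [Finset.subset_empty.1 hS]
    simp [IsTightOn]
  | insert v D hDv ih =>
    obtain ⟨f, hf⟩ := ih
    exact hf.exists_insert hDv hH hN hR hg

end Coloring

theorem nonempty_hom_cycleGraph_of_eliminationWidthLE [Fintype V] [LinearOrder V] {k l : ℕ}
    (hGH : G ≤ H) (hH : H.EliminationWidthLE k) (hl : 0 < l)
    (hg : ∀ (u : V) (w : G.Walk u u), w.IsCycle → Odd w.length →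
      4 * ((2 * l + 1) * 4 ^ ((k + 1) ^ 2)) + 1 ≤ w.length) :
    Nonempty (G →g cycleGraph (2 * l + 1)) := by
  have hN : 2 ≤ 2 * l + 1 := by omega
  obtain ⟨f, hf⟩ := exists_isLiftableColoringOn hH (odd_two_mul_add_one l) le_rfl hg
    Finset.univ
  exact ⟨⟨f, fun {a b} hab => hf.cycleGraph_adj hGH hN (Nat.one_le_iff_ne_zero.2 (by positivity))
    (Finset.mem_univ a) (Finset.mem_univ b) hab⟩⟩

end SimpleGraph

lemma IsKTree.eliminationWidthLE {k n : ℕ} {H : SimpleGraph (Fin n)} (hH : IsKTree k n H) :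
    H.EliminationWidthLE k := by
  obtain ⟨-, hinit, hstep⟩ := hH
  intro j
  by_cases hj : k + 1 ≤ j.val
  · obtain ⟨s, hcard, -, hadj, hclique⟩ := hstep j hj
    exact ⟨s, hcard.le, fun a ha b hb hab => hclique a ha b hb hab,
      fun i hij h => (hadj i hij).1 h⟩
  · refine ⟨Finset.Iio j, by rw [Fin.card_Iio]; omega, fun a ha b hb hab => ?_,
      fun i hij _ => Finset.mem_Iio.2 hij⟩
    simp only [Finset.coe_Iio, Set.mem_Iio] at ha hb
    exact hinit a b (by omega) (by omega) hab

theorem stmt1_general (k l : ℕ) (hl : 0 < l) :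
    ∃ g : ℕ, ∀ (V : Type) [Fintype V] (G : SimpleGraph V), TreewidthLE k G →
      (∀ (u : V) (w : G.Walk u u), w.IsCycle → Odd w.length → g ≤ w.length) →
      Nonempty (G →g SimpleGraph.cycleGraph (2 * l + 1)) := by
  refine ⟨4 * ((2 * l + 1) * 4 ^ ((k + 1) ^ 2)) + 1, fun V _ G ⟨n, H, hH, e, he⟩ hg => ?_⟩
  let _ : LinearOrder V := LinearOrder.lift' e e.injective
  exact nonempty_hom_cycleGraph_of_eliminationWidthLE (H := H.comap e) (fun u v h => he u v h)
    (hH.eliminationWidthLE.comap (OrderEmbedding.ofStrictMono e fun _ _ h => h)) hl hg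

/-- For all positive integers `k` and `l`, there exists `g` such that every
finite graph with tree-width at most `k` and odd-girth at least `g` admits a graph
homomorphism to the cycle of length `2l + 1`. -/
theorem stmt1 (k l : ℕ) (hk : 0 < k) (hl : 0 < l) :
    ∃ g : ℕ, ∀ (V : Type) [Fintype V] (G : SimpleGraph V), TreewidthLE k G →
      (∀ (u : V) (w : G.Walk u u), w.IsCycle → Odd w.length → g ≤ w.length) →
      Nonempty (G →g SimpleGraph.cycleGraph (2 * l + 1)) :=
  stmt1_general k l hl
end

section
/- For all positive integers p and q with 2 < p/q, there exists an integer d such that the following holds: for every bipartite graph H and every partial coloring φ assigning colors from {0,...,p-1} to a set A of vertices of H whose pairwise distances in H are all at least d, there exists a (p,q)-coloring of H that coincides with φ on A. -/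
open SimpleGraph

/-!
Colour the vertices at distance `t ≤ p` from a precoloured vertex `a` by the `t`-th term of a
walk on the circle `ℤ/p` that starts at `φ a` and advances by `q` or `q + 1` at each step
(both admissible since `2q < p`): after `p` steps the base advance `p * q` vanishes modulo `p`,
and up to `p - 1` extra units steer the walk onto the colour `0` or `q` prescribed by the
bipartition. Every other vertex gets colour `0` or `q` according to its side. Precoloured
vertices at distance at least `2p + 2` have disjoint neighbourhoods of radius `p`, and
bipartiteness makes the distances to `a` of adjacent vertices differ by exactly one.
-/

def PQApart (p q x y : ℕ) : Prop :=
  (q : ℤ) ≤ |(x : ℤ) - (y : ℤ)| ∧ |(x : ℤ) - (y : ℤ)| ≤ (p : ℤ) - q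

theorem PQApart.symm {p q x y : ℕ} (h : PQApart p q x y) : PQApart p q y x := by
  rwa [PQApart, abs_sub_comm]

theorem pqApart_add_mod {p q u δ : ℕ} (hu : u < p) (hqδ : q ≤ δ) (hδp : δ + q ≤ p) :
    PQApart p q u ((u + δ) % p) := by
  unfold PQApart
  rw [le_abs, abs_le]
  rcases Nat.lt_or_ge (u + δ) p with h | h
  · rw [Nat.mod_eq_of_lt h]
    omega
  · rw [Nat.mod_eq_sub_mod h, Nat.mod_eq_of_lt (by omega)]
    omega

theorem pqApart_mul_of_ne {p q m n : ℕ} (hpq : 2 * q ≤ p) (hm : m < 2) (hn : n < 2)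
    (hmn : m ≠ n) : PQApart p q (q * m) (q * n) := by
  obtain ⟨rfl, rfl⟩ | ⟨rfl, rfl⟩ : m = 0 ∧ n = 1 ∨ m = 1 ∧ n = 0 := by omega
  all_goals
    simp only [PQApart, mul_zero, mul_one, Nat.cast_zero, zero_sub, sub_zero, abs_neg,
      Nat.abs_cast]
    omega

def IsPQWalk (p q : ℕ) (g : ℕ → ℕ) : Prop :=
  ∀ t, PQApart p q (g t) (g (t + 1))

theorem IsPQWalk.piecewise {p q T : ℕ} {w w' : ℕ → ℕ} (hw : IsPQWalk p q w)
    (hw' : IsPQWalk p q w') (hT : w T = w' T) :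
    IsPQWalk p q fun t => if t ≤ T then w t else w' t := by
  intro t
  rcases lt_trichotomy t T with h | rfl | h
  · simpa only [if_pos h.le, if_pos (Nat.succ_le_of_lt h)] using hw t
  · simpa only [if_pos le_rfl, if_neg (Nat.not_succ_le_self t), hT] using hw' t
  · simpa only [if_neg (Nat.not_le_of_lt h), if_neg (Nat.not_le_of_lt (Nat.lt_succ_of_lt h))]
      using hw' t

theorem isPQWalk_alternate {p q : ℕ} (hpq : 2 * q ≤ p) (b : ℕ) :
    IsPQWalk p q fun t => q * ((b + t) % 2) :=
  fun t => pqApart_mul_of_ne hpq (Nat.mod_lt _ two_pos) (Nat.mod_lt _ two_pos) (by omega)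

theorem isPQWalk_rotate {p q : ℕ} (hpq : 2 * q < p) (x s : ℕ) :
    IsPQWalk p q fun t => (x + t * q + min s t) % p := by
  intro t
  have hstep : x + (t + 1) * q + min s (t + 1) =
      x + t * q + min s t + (q + (min s (t + 1) - min s t)) := by
    rw [add_mul]
    omega
  show PQApart p q _ ((x + (t + 1) * q + min s (t + 1)) % p)
  rw [hstep, ← Nat.mod_add_mod]
  exact pqApart_add_mod (Nat.mod_lt _ (by omega)) (Nat.le_add_right q _) (by omega)

theorem exists_pqWalk {p q x : ℕ} (hpq : 2 * q < p) (hx : x < p) (b : ℕ) :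
    ∃ g : ℕ → ℕ, IsPQWalk p q g ∧ g 0 = x ∧ (∀ t, g t < p) ∧
      ∀ t ≥ p, g t = q * ((b + t) % 2) := by
  have hq_alt : ∀ t, q * ((b + t) % 2) < p := fun t =>
    lt_of_le_of_lt (mul_le_of_le_one_right' (by omega)) (by omega)
  set z := q * ((b + p) % 2)
  set s := (z + p - x) % p
  have hrot : (x + p * q + min s p) % p = z := by
    rw [min_eq_left (Nat.mod_lt _ (by omega)).le, add_right_comm, Nat.add_mul_mod_self_left,
      Nat.add_mod_mod, show x + (z + p - x) = z + p by omega, Nat.add_mod_right,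
      Nat.mod_eq_of_lt (hq_alt p)]
  refine ⟨fun t => if t ≤ p then (x + t * q + min s t) % p else q * ((b + t) % 2),
    (isPQWalk_rotate hpq x s).piecewise (isPQWalk_alternate hpq.le b) hrot, ?_, fun t => ?_,
    fun t ht => ?_⟩
  · simp [Nat.mod_eq_of_lt hx]
  · dsimp only
    split_ifs
    exacts [Nat.mod_lt _ (by omega), hq_alt t]
  · dsimp only
    split_ifs with h
    · obtain rfl : t = p := le_antisymm h ht
      exact hrot
    · rfl

namespace SimpleGraph

theorem eq_of_edist_add_edist_lt {V : Type} {H : SimpleGraph V} {A : Set V} {d : ℕ∞}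
    (hA : A.Pairwise fun a a' => d ≤ H.edist a a') {v a a' : V} (ha : a ∈ A) (ha' : a' ∈ A)
    (h : H.edist v a + H.edist v a' < d) : a = a' := by
  by_contra hne
  refine (hA ha ha' hne).not_gt (lt_of_le_of_lt ?_ h)
  rw [edist_comm (u := v)]
  exact H.edist_triangle

namespace Coloring

variable {V : Type} {H : SimpleGraph V} (β : H.Coloring (Fin 2))

theorem add_length_mod_two {u v : V} (w : H.Walk u v) : ((β u : ℕ) + w.length) % 2 = β v := by
  induction w with
  | nil => exact Nat.mod_eq_of_lt (β _).isLt
  | @cons a b c hab w ih =>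
    have hne : (β a : ℕ) ≠ β b := fun h => β.valid hab (Fin.ext h)
    have := (β a).isLt
    have := (β b).isLt
    rw [Walk.length_cons]
    omega

theorem add_edist_mod_two {u v : V} {n : ℕ} (h : H.edist u v = n) :
    ((β u : ℕ) + n) % 2 = β v := by
  obtain ⟨w, rfl⟩ := exists_walk_of_edist_eq_coe h
  exact β.add_length_mod_two w

end Coloring

theorem IsBipartite.exists_edist_eq_of_adj {V : Type} {H : SimpleGraph V} (hH : H.IsBipartite)
    {u v a : V} {t : ℕ} (huv : H.Adj u v) (hu : H.edist u a = t) :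
    ∃ s : ℕ, H.edist v a = s ∧ (s = t + 1 ∨ s + 1 = t) := by
  obtain ⟨β⟩ := hH
  have hv_le : H.edist v a ≤ t + 1 := by
    calc H.edist v a ≤ H.edist v u + H.edist u a := H.edist_triangle
      _ = t + 1 := by rw [edist_eq_one_iff_adj.mpr huv.symm, hu, add_comm]
  obtain ⟨s, hs, hst⟩ := ENat.le_natCast_iff.mp (by exact_mod_cast hv_le)
  have hts : (t : ℕ∞) ≤ s + 1 := by
    calc (t : ℕ∞) = H.edist u a := hu.symm
      _ ≤ H.edist u v + H.edist v a := H.edist_triangle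
      _ = s + 1 := by rw [edist_eq_one_iff_adj.mpr huv, hs, add_comm]
  have hpar_u := β.add_edist_mod_two (edist_comm.trans hu)
  have hpar_v := β.add_edist_mod_two (edist_comm.trans hs)
  have hne : (β u : ℕ) ≠ β v := fun h => β.valid huv (Fin.ext h)
  have : t ≤ s + 1 := by exact_mod_cast hts
  exact ⟨s, hs, by omega⟩

noncomputable def extendAlongRays {V : Type} (H : SimpleGraph V) (β : H.Coloring (Fin 2))
    (A : Set V) (q T : ℕ) (g : V → ℕ → ℕ) (v : V) : ℕ :=
  open Classical in
  if h : ∃ a ∈ A, H.edist v a ≤ T then g h.choose (H.edist v h.choose).toNat else q * β v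

section extendAlongRays

variable {V : Type} {H : SimpleGraph V} (β : H.Coloring (Fin 2)) {A : Set V} {p q T : ℕ}
  {g : V → ℕ → ℕ}

theorem extendAlongRays_eq (hA : A.Pairwise fun a a' => ((2 * T + 2 : ℕ) : ℕ∞) ≤ H.edist a a')
    (hg : ∀ a ∈ A, ∀ t ≥ T, g a t = q * ((β a + t) % 2)) {v a : V} {t : ℕ} (ha : a ∈ A)
    (hv : H.edist v a = t) (ht : t ≤ T + 1) : extendAlongRays H β A q T g v = g a t := by
  unfold extendAlongRays
  split_ifs with h
  · obtain ⟨ha', hva'⟩ := h.choose_spec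
    have hlt : H.edist v h.choose + H.edist v a < ((2 * T + 2 : ℕ) : ℕ∞) := by
      rw [hv]
      calc H.edist v h.choose + t ≤ T + (T + 1 : ℕ) := add_le_add hva' (by exact_mod_cast ht)
        _ < _ := by norm_cast; omega
    rw [eq_of_edist_add_edist_lt hA ha' ha hlt, hv, ENat.toNat_natCast]
  · have hTt : T ≤ t := by
      by_contra! htT
      exact h ⟨a, ha, by rw [hv]; exact_mod_cast htT.le⟩
    rw [hg a ha t hTt, β.add_edist_mod_two (edist_comm.trans hv)]

theorem isPQColoring_extendAlongRays (hpq : 2 * q < p)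
    (hA : A.Pairwise fun a a' => ((2 * T + 2 : ℕ) : ℕ∞) ≤ H.edist a a')
    (hwalk : ∀ a ∈ A, IsPQWalk p q (g a)) (hlt : ∀ a ∈ A, ∀ t, g a t < p)
    (hg : ∀ a ∈ A, ∀ t ≥ T, g a t = q * ((β a + t) % 2)) :
    IsPQColoring H p q (extendAlongRays H β A q T g) := by
  have near : ∀ u v, H.Adj u v → (∃ a ∈ A, H.edist u a ≤ T) →
      PQApart p q (extendAlongRays H β A q T g u) (extendAlongRays H β A q T g v) := by
    rintro u v huv ⟨a, ha, hua⟩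
    obtain ⟨t, hu, htT⟩ := ENat.le_natCast_iff.mp hua
    obtain ⟨s, hv, rfl | rfl⟩ := IsBipartite.exists_edist_eq_of_adj ⟨β⟩ huv hu
    all_goals
      rw [extendAlongRays_eq β hA hg ha hu (by omega), extendAlongRays_eq β hA hg ha hv (by omega)]
    exacts [hwalk a ha t, (hwalk a ha s).symm]
  have far : ∀ v, ¬(∃ a ∈ A, H.edist v a ≤ T) → extendAlongRays H β A q T g v = q * β v :=
    fun v h => dif_neg h
  refine ⟨fun v => ?_, fun u v huv => ?_⟩
  · by_cases h : ∃ a ∈ A, H.edist v a ≤ T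
    · exact (dif_pos h).trans_lt (hlt _ h.choose_spec.1 _)
    · rw [far v h]
      exact lt_of_le_of_lt (mul_le_of_le_one_right' (by omega)) (by omega)
  · by_cases hu : ∃ a ∈ A, H.edist u a ≤ T
    · exact near u v huv hu
    by_cases hv : ∃ a ∈ A, H.edist v a ≤ T
    · exact (near v u huv.symm hv).symm
    rw [far u hu, far v hv]
    exact pqApart_mul_of_ne hpq.le (β u).isLt (β v).isLt fun h => β.valid huv (Fin.ext h)

end extendAlongRays

end SimpleGraph

theorem stmt4_general (p q : ℕ) (hpq : 2 * q < p) :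
    ∃ d : ℕ, ∀ (V : Type) [Fintype V] (H : SimpleGraph V), H.Colorable 2 →
      ∀ (A : Set V) (φ : V → ℕ), (∀ a ∈ A, φ a < p) →
        (∀ u ∈ A, ∀ v ∈ A, u ≠ v → (d : ℕ∞) ≤ H.edist u v) →
        ∃ c : V → ℕ, IsPQColoring H p q c ∧ ∀ a ∈ A, c a = φ a := by
  refine ⟨2 * p + 2, fun V _ H ⟨β⟩ A φ hφ hA => ?_⟩
  have rays : ∀ a ∈ A, ∃ g : ℕ → ℕ, IsPQWalk p q g ∧ g 0 = φ a ∧ (∀ t, g t < p) ∧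
      ∀ t ≥ p, g t = q * ((β a + t) % 2) :=
    fun a ha => exists_pqWalk hpq (hφ a ha) (β a)
  choose! g hwalk hstart hlt hend using rays
  refine ⟨extendAlongRays H β A q p g, isPQColoring_extendAlongRays β hpq hA hwalk hlt hend,
    fun a ha => ?_⟩
  rw [extendAlongRays_eq β hA hend ha (edist_self (v := a)) (Nat.zero_le _), hstart a ha]

/-- For all positive integers `p`, `q` with `2 < p/q`, there exists `d` such
that: for every bipartite graph `H` and every precoloring `φ` with colors from
`{0, …, p-1}` of a set `A` of vertices whose pairwise distances are at least `d`, there is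
a `(p,q)`-coloring of `H` coinciding with `φ` on `A`. -/
theorem stmt4 (p q : ℕ) (hp : 0 < p) (hq : 0 < q) (hpq : 2 * q < p) :
    ∃ d : ℕ, ∀ (V : Type) [Fintype V] (H : SimpleGraph V), H.Colorable 2 →
      ∀ (A : Set V) (φ : V → ℕ), (∀ a ∈ A, φ a < p) →
        (∀ u ∈ A, ∀ v ∈ A, u ≠ v → (d : ℕ∞) ≤ H.edist u v) →
        ∃ c : V → ℕ, IsPQColoring H p q c ∧ ∀ a ∈ A, c a = φ a :=
  stmt4_general p q hpq
end

section
/- Let G¹ and G² be two bipartite rooted partial k-trees with types M¹ and M² such that there exists a bipartite type M⁰ with M⁰ ⪯ M¹ and M⁰ ⪯ M². Then M¹ and M² are compatible, G¹ ⊕ G² is a bipartite rooted partial k-tree, and its type M satisfies M⁰ ⪯ M. -/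
open SimpleGraph

/-!
Choose `d : Fin (k + 1) → ZMod 2` with `d i + d j ≡ M⁰ i j` whenever `M⁰ i j` is finite; this is
possible because `M⁰` is bipartite. Since `M⁰ ⪯ Mˡ`, the same `d` has the parity of every finite
root distance in `Gˡ`, so flipping colours on components gives a proper 2-colouring of `Gˡ` equal
to `d` on the roots. The two colourings glue, and in each of the three graphs the distance between
roots `i` and `j`, when finite, has the parity of `d i + d j`; this gives all parity claims.

For `M⁰ i j ≤ dist(i, j)` in `G¹ ⊕ G²`, the function `x ↦ min_t (dist(x, v_t) + M⁰ t j)`, with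
the distance taken in the side containing `x`, is well defined on the glued graph, drops by at most
one along an edge, and equals `M⁰ i j` at the root `i`.

The `k`-trees containing `G¹` and `G²` glue along their root cliques into a `k`-tree: any
`(k+1)`-clique of a `k`-tree can serve as the initial clique of a construction order, so the second
one can be rebuilt from its roots and its other vertices added one at a time to the first.
-/

open Finset

namespace SimpleGraph

variable {V : Type*} {G : SimpleGraph V}

theorem Coloring.add_eq_length (c : G.Coloring (ZMod 2)) {u v : V} (p : G.Walk u v) :
    c u + c v = p.length := by
  induction p with
  | nil => exact CharTwo.add_self_eq_zero _
  | @cons u v w h p ih =>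
    have hne : c u ≠ c v := c.valid h
    have hcu : c u = c v + 1 := by
      generalize c u = a, c v = b at hne
      revert a b; decide
    rw [Walk.length_cons, Nat.cast_succ, ← ih, hcu]
    ring

theorem Coloring.add_eq_of_edist_eq (c : G.Coloring (ZMod 2)) {u v : V} {a : ℕ}
    (h : G.edist u v = a) : c u + c v = a := by
  obtain ⟨p, rfl⟩ := exists_walk_of_edist_eq_coe h
  exact c.add_eq_length p

theorem le_add_edist_of_forall_adj {ψ : V → ℕ∞} (hψ : ∀ u v, G.Adj u v → ψ u ≤ ψ v + 1)
    (u v : V) : ψ u ≤ ψ v + G.edist u v := by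
  have hwalk : ∀ {u v} (p : G.Walk u v), ψ u ≤ ψ v + p.length := by
    intro u v p
    induction p with
    | nil => simp
    | @cons _ _ w h p ih =>
      calc _ ≤ _ + 1 := hψ _ _ h
        _ ≤ ψ w + p.length + 1 := by gcongr
        _ = _ := by rw [Walk.length_cons, Nat.cast_succ, add_assoc]
  rw [edist, ENat.add_iInf]
  exact le_iInf hwalk

theorem iInf_edist_add_le_of_adj {ι : Type*} (r : ι → V) (μ : ι → ℕ∞) {u v : V}
    (h : G.Adj u v) : ⨅ t, G.edist u (r t) + μ t ≤ (⨅ t, G.edist v (r t) + μ t) + 1 := by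
  rw [ENat.iInf_add]
  refine iInf_mono fun t => ?_
  calc G.edist u (r t) + μ t ≤ G.edist u v + G.edist v (r t) + μ t := by
        gcongr; exact G.edist_triangle
    _ = _ := by rw [edist_eq_one_iff_adj.2 h]; ring

theorem iInf_edist_add_eq {ι : Type*} (r : ι → V) {μ : ι → ℕ∞}
    (hμ : ∀ s t, μ s ≤ G.edist (r s) (r t) + μ t) (s : ι) :
    ⨅ t, G.edist (r s) (r t) + μ t = μ s :=
  le_antisymm ((iInf_le _ s).trans (by simp)) (le_iInf (hμ s))

end SimpleGraph

theorem ZMod.natCast_eq_natCast_iff_even {a b : ℕ} :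
    (a : ZMod 2) = b ↔ (Even a ↔ Even b) := by
  rw [← ZMod.natCast_eq_zero_iff_even, ← ZMod.natCast_eq_zero_iff_even]
  generalize (a : ZMod 2) = x, (b : ZMod 2) = y
  revert x y; decide

def IsParityPotential {m : ℕ} (M : Fin m → Fin m → ℕ∞) (d : Fin m → ZMod 2) : Prop :=
  ∀ i j (a : ℕ), M i j = a → d i + d j = a

section ParityPotential

variable {m : ℕ} {M M' : Fin m → Fin m → ℕ∞} {d : Fin m → ZMod 2}

theorem IsBipartiteType.exists_isParityPotential (hM : IsBipartiteType M) :
    ∃ d, IsParityPotential M d := by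
  obtain ⟨⟨hsymm, hzero, htri⟩, heven⟩ := hM
  let s : Setoid (Fin m) :=
    { r := fun i j => M i j ≠ ⊤
      iseqv :=
        ⟨fun i => by simp [(hzero i i).2 rfl], fun {i j} h => hsymm i j ▸ h,
          fun {i j l} hij hjl =>
            ne_top_of_le_ne_top (WithTop.add_ne_top.2 ⟨hij, hjl⟩) (htri i j l)⟩ }
  -- `d i` is the parity of the distance to a fixed representative of the class of `i`
  let base i := (Quotient.mk s i).out
  have hbase i : M (base i) i = (M (base i) i).toNat :=
    (ENat.natCast_toNat (Quotient.mk_out (s := s) i)).symm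
  refine ⟨fun i => ((M (base i) i).toNat : ZMod 2), fun i j a ha => ?_⟩
  have hij : base i = base j :=
    congrArg Quotient.out (Quotient.sound (ha ▸ ENat.natCast_ne_top a : M i j ≠ ⊤))
  have h := heven (base i) i j _ a _ (hbase i) ha (hij ▸ hbase j)
  rw [← ZMod.natCast_eq_zero_iff_even] at h
  push_cast at h
  simp only [← hij]
  grind

theorem IsParityPotential.of_typeLE (h : IsParityPotential M d) (hle : TypeLE M M') :
    IsParityPotential M' d := by
  intro i j a ha
  obtain ⟨a₀, ha₀⟩ := ENat.ne_top_iff_exists.mp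
    (ne_top_of_le_ne_top (ha ▸ ENat.natCast_ne_top a) (hle.2 i j))
  rw [h i j a₀ ha₀.symm, ZMod.natCast_eq_natCast_iff_even]
  exact hle.1 i j a₀ a ha₀.symm ha

theorem IsParityPotential.compatibleTypes (h : IsParityPotential M d)
    (h' : IsParityPotential M' d) : CompatibleTypes M M' := fun i j a b ha hb =>
  ZMod.natCast_eq_natCast_iff_even.1 ((h i j a ha).symm.trans (h' i j b hb))

variable {V : Type} {G : SimpleGraph V}

theorem SimpleGraph.Coloring.isParityPotential_typeOf (c : G.Coloring (ZMod 2))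
    (r : Fin m → V) : IsParityPotential (typeOf G r) (c ∘ r) :=
  fun _ _ _ h => c.add_eq_of_edist_eq h

theorem SimpleGraph.Coloring.exists_eq_of_isParityPotential (c₀ : G.Coloring (ZMod 2))
    {r : Fin m → V} (hd : IsParityPotential (typeOf G r) d) :
    ∃ c : G.Coloring (ZMod 2), ∀ i, c (r i) = d i := by
  classical
  -- the shift on a component containing a root `r i` does not depend on `i`, by `hd`
  let δ : G.ConnectedComponent → ZMod 2 := fun C =>
    if h : ∃ i, G.connectedComponentMk (r i) = C then d h.choose + c₀ (r h.choose) else 0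
  have hδ i : δ (G.connectedComponentMk (r i)) = d i + c₀ (r i) := by
    have h : ∃ j, G.connectedComponentMk (r j) = G.connectedComponentMk (r i) := ⟨i, rfl⟩
    simp only [δ, dif_pos h]
    obtain ⟨a, ha⟩ := ENat.ne_top_iff_exists.mp
      (edist_ne_top_iff_reachable.mpr (ConnectedComponent.exact h.choose_spec))
    have h₁ := hd _ _ a ha.symm
    have h₂ := c₀.add_eq_of_edist_eq ha.symm
    grind
  refine ⟨Coloring.mk (fun v => c₀ v + δ (G.connectedComponentMk v)) fun {u v} huv => ?_,
    fun i => ?_⟩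
  · rw [ConnectedComponent.eq.mpr huv.reachable]
    exact fun h => c₀.valid huv (add_right_cancel h)
  · change c₀ (r i) + δ _ = d i
    rw [hδ]
    grind

end ParityPotential

section Glue

variable {V₁ V₂ : Type} {m : ℕ} {G₁ : SimpleGraph V₁} {G₂ : SimpleGraph V₂}
  {r₁ : Fin m → V₁} {r₂ : Fin m → V₂}

def glueColoring {α : Type} (c₁ : G₁.Coloring α) (c₂ : G₂.Coloring α)
    (h : ∀ i, c₁ (r₁ i) = c₂ (r₂ i)) : (glue G₁ G₂ r₁ r₂).Coloring α :=
  Coloring.mk (Quot.lift (Sum.elim c₁ c₂) (by rintro _ _ ⟨i, rfl, rfl⟩; exact h i)) <| by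
    rintro _ _ ⟨-, (a | a), (b | b), hab, rfl, rfl⟩ <;> simp only [sumAdj] at hab
    exacts [c₁.valid hab, c₂.valid hab]

theorem typeOf_glue_ge {M : Fin m → Fin m → ℕ∞} (hM : IsType M)
    (h₁ : ∀ i j, M i j ≤ typeOf G₁ r₁ i j) (h₂ : ∀ i j, M i j ≤ typeOf G₂ r₂ i j)
    (i j : Fin m) : M i j ≤ typeOf (glue G₁ G₂ r₁ r₂) (glueRoot r₁ r₂) i j := by
  obtain ⟨-, hzero, htri⟩ := hM
  have hμ {V : Type} {G : SimpleGraph V} {r : Fin m → V} (h : ∀ i j, M i j ≤ typeOf G r i j)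
      (s t : Fin m) : M s j ≤ G.edist (r s) (r t) + M t j :=
    (htri s t j).trans (by gcongr; exact h s t)
  let ψ : GlueVerts r₁ r₂ → ℕ∞ := Quot.lift
    (Sum.elim (fun u => ⨅ t, G₁.edist u (r₁ t) + M t j)
      (fun u => ⨅ t, G₂.edist u (r₂ t) + M t j))
    (by
      rintro _ _ ⟨t, rfl, rfl⟩
      simp only [Sum.elim_inl, Sum.elim_inr, iInf_edist_add_eq _ (hμ h₁),
        iInf_edist_add_eq _ (hμ h₂)])
  have hψ : ∀ x y, (glue G₁ G₂ r₁ r₂).Adj x y → ψ x ≤ ψ y + 1 := by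
    rintro _ _ ⟨-, (a | a), (b | b), hab, rfl, rfl⟩ <;> simp only [sumAdj] at hab
    · exact iInf_edist_add_le_of_adj r₁ _ hab
    · exact iInf_edist_add_le_of_adj r₂ _ hab
  have hroot i : ψ (glueRoot r₁ r₂ i) = M i j := iInf_edist_add_eq _ (hμ h₁) i
  calc M i j = ψ (glueRoot r₁ r₂ i) := (hroot i).symm
    _ ≤ ψ (glueRoot r₁ r₂ j) + typeOf _ (glueRoot r₁ r₂) i j :=
      le_add_edist_of_forall_adj hψ (glueRoot r₁ r₂ i) (glueRoot r₁ r₂ j)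
    _ = _ := by rw [hroot, (hzero j j).2 rfl, zero_add]

end Glue

section KTreeOn

variable {V : Type*} [DecidableEq V]

/-- The subgraph of `H` induced on `S` is a `k`-tree, built up from the `(k+1)`-clique `C`. -/
inductive IsKTreeOn (k : ℕ) (H : SimpleGraph V) (C : Finset V) : Finset V → Prop
  | clique : H.IsNClique (k + 1) C → IsKTreeOn k H C C
  | addVertex {S T : Finset V} {v : V} : IsKTreeOn k H C S → v ∉ S → T ⊆ S →
      H.IsNClique k T → (∀ u ∈ S, H.Adj v u ↔ u ∈ T) → IsKTreeOn k H C (insert v S)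

namespace IsKTreeOn

variable {k : ℕ} {H : SimpleGraph V} {C S : Finset V}

theorem subset (h : IsKTreeOn k H C S) : C ⊆ S := by
  induction h with
  | clique => exact subset_rfl
  | addVertex _ _ _ _ _ ih => exact ih.trans (subset_insert _ _)

theorem exists_adj_of_isNClique (h : IsKTreeOn k H C S) {T : Finset V} (hTS : T ⊆ S)
    (hT : H.IsNClique k T) : ∃ w ∈ S, w ∉ T ∧ ∀ u ∈ T, H.Adj w u := by
  induction h generalizing T with
  | clique hC =>
    obtain ⟨w, hwC, hwT⟩ := exists_of_ssubset (hTS.ssubset_of_ne (by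
      rintro rfl; have := hC.card_eq.symm.trans hT.card_eq; omega))
    exact ⟨w, hwC, hwT, fun u hu => hC.isClique hwC (hTS hu) (by rintro rfl; exact hwT hu)⟩
  | @addVertex S T' v h hv hT'S hT' hadj ih =>
    by_cases hvT : v ∈ T
    · -- `T` minus `v` lies in the neighbourhood `T'` of `v`, which has one more element
      have hsub : T.erase v ⊆ T' := fun u hu => by
        obtain ⟨huv, huT⟩ := mem_erase.1 hu
        have huS : u ∈ S := (mem_insert.1 (hTS huT)).resolve_left huv
        exact (hadj u huS).1 (hT.isClique hvT huT (Ne.symm huv))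
      obtain ⟨w, hwT', hwT⟩ := exists_of_ssubset (hsub.ssubset_of_ne (by
        intro heq
        have := congrArg card heq
        rw [card_erase_of_mem hvT, hT.card_eq, hT'.card_eq] at this
        have : 0 < k := hT.card_eq ▸ card_pos.2 ⟨v, hvT⟩
        omega))
      have hwv : w ≠ v := fun hwv => hv (hwv ▸ hT'S hwT')
      refine ⟨w, mem_insert_of_mem (hT'S hwT'), fun hw => hwT (mem_erase.2 ⟨hwv, hw⟩),
        fun u hu => ?_⟩
      by_cases huv : u = v
      · exact huv ▸ ((hadj w (hT'S hwT')).2 hwT').symm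
      · exact hT'.isClique hwT' (hsub (mem_erase.2 ⟨huv, hu⟩))
          (fun hwu => hwT (hwu ▸ mem_erase.2 ⟨huv, hu⟩))
    · obtain ⟨w, hwS, hwT, hw⟩ :=
        ih (fun u hu => (mem_insert.1 (hTS hu)).resolve_left (fun h => hvT (h ▸ hu))) hT
      exact ⟨w, mem_insert_of_mem hwS, hwT, hw⟩

theorem reroot_addVertex {T : Finset V} {w v : V} (h : IsKTreeOn k H (insert w T) S)
    (hwT : w ∉ T) (hvS : v ∉ S) (hadj : ∀ u ∈ S, H.Adj v u ↔ u ∈ T) :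
    IsKTreeOn k H (insert v T) (insert v S) := by
  induction h with
  | clique hC =>
    have hT : H.IsNClique k T := ⟨hC.isClique.subset (by simp), by
      have := hC.card_eq
      rw [card_insert_of_notMem hwT] at this
      omega⟩
    have hvw : ¬ H.Adj w v := fun h' => hwT ((hadj w (mem_insert_self _ _)).1 h'.symm)
    have hwv : w ≠ v := fun h' => hvS (h' ▸ mem_insert_self _ _)
    rw [Finset.insert_comm]
    refine (clique (hT.insert fun u hu => (hadj u (mem_insert_of_mem hu)).2 hu)).addVertex
      (by simp [hwv, hwT]) (subset_insert _ _) hT fun u hu => ?_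
    rcases mem_insert.1 hu with rfl | hu
    · exact iff_of_false hvw fun h' => hvS (mem_insert_of_mem h')
    · exact iff_of_true (hC.isClique (mem_insert_self _ _) (mem_insert_of_mem hu)
        (fun h' => hwT (h' ▸ hu))) hu
  | @addVertex S T' u h hu hT'S hT' hadj' ih =>
    have huv : u ≠ v := fun h' => hvS (h' ▸ mem_insert_self _ _)
    have huT : u ∉ T := fun h' => hu (h.subset (mem_insert_of_mem h'))
    rw [Finset.insert_comm]
    refine (ih (fun h' => hvS (mem_insert_of_mem h')) fun x hx =>
      hadj x (mem_insert_of_mem hx)).addVertex (by simp [huv, hu])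
      (hT'S.trans (subset_insert _ _)) hT' fun x hx => ?_
    rcases mem_insert.1 hx with rfl | hx
    · exact iff_of_false (fun h' => huT ((hadj u (mem_insert_self _ _)).1 h'.symm))
        fun h' => hvS (mem_insert_of_mem (hT'S h'))
    · exact hadj' x hx

theorem reroot (h : IsKTreeOn k H C S) {D : Finset V} (hDS : D ⊆ S)
    (hD : H.IsNClique (k + 1) D) : IsKTreeOn k H D S := by
  induction h generalizing D with
  | clique hC =>
    obtain rfl := eq_of_subset_of_card_le hDS (by rw [hC.card_eq, hD.card_eq])
    exact clique hD
  | @addVertex S T v h hv hTS hT hadj ih =>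
    by_cases hvD : v ∈ D
    · have hDT : D.erase v = T := eq_of_subset_of_card_le (fun u hu => by
          obtain ⟨huv, huD⟩ := mem_erase.1 hu
          exact (hadj u ((mem_insert.1 (hDS huD)).resolve_left huv)).1
            (hD.isClique hvD huD (Ne.symm huv)))
        (by rw [hT.card_eq, card_erase_of_mem hvD, hD.card_eq]; rfl)
      obtain ⟨w, hwS, hwT, hw⟩ := h.exists_adj_of_isNClique hTS hT
      rw [← insert_erase hvD, hDT]
      exact (ih (insert_subset hwS hTS) (hT.insert hw)).reroot_addVertex hwT hv hadj
    · have hDS' : D ⊆ S := fun u hu =>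
        (mem_insert.1 (hDS hu)).resolve_left (fun h => hvD (h ▸ hu))
      exact (ih hDS' hD).addVertex hv hTS hT hadj

theorem union {D S₁ : Finset V} (h₁ : IsKTreeOn k H D S₁) (h₂ : IsKTreeOn k H C S)
    (hCS₁ : C ⊆ S₁) (hinter : ∀ x ∈ S₁, x ∈ S → x ∈ C)
    (hcross : ∀ x ∈ S₁, ∀ y ∈ S, x ∉ C → y ∉ C → ¬ H.Adj x y) :
    IsKTreeOn k H D (S₁ ∪ S) := by
  induction h₂ with
  | clique => rwa [union_eq_left.2 hCS₁]
  | @addVertex S T v h hv hTS hT hadj ih =>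
    have hvC : v ∉ C := fun hvC => hv (h.subset hvC)
    have hvS₁ : v ∉ S₁ := fun h' => hvC (hinter v h' (mem_insert_self _ _))
    rw [union_insert]
    refine (ih (fun x hx hxS => hinter x hx (mem_insert_of_mem hxS))
      fun x hx y hy => hcross x hx y (mem_insert_of_mem hy)).addVertex (by simp [hvS₁, hv])
      (hTS.trans subset_union_right) hT fun u hu => ?_
    by_cases huS : u ∈ S
    · exact hadj u huS
    · have hu₁ : u ∈ S₁ := (mem_union.1 hu).resolve_right huS
      exact iff_of_false (fun h' => hcross u hu₁ v (mem_insert_self _ _)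
        (fun huC => huS (h.subset huC)) hvC h'.symm) fun h' => huS (hTS h')

end IsKTreeOn

theorem isKTree_of_comap_castSucc {k N : ℕ} {K : SimpleGraph (Fin (N + 1))}
    (hK : IsKTree k N (K.comap Fin.castSucc)) {s : Finset (Fin N)}
    (hs : (K.comap Fin.castSucc).IsNClique k s)
    (hlast : ∀ i, K.Adj i.castSucc (Fin.last N) ↔ i ∈ s) : IsKTree k (N + 1) K := by
  obtain ⟨hkN, hfirst, hlater⟩ := hK
  have hcast (i : Fin (N + 1)) (hi : i.val < N) : ∃ i' : Fin N, i = i'.castSucc :=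
    ⟨i.castLT hi, (Fin.castSucc_castLT i hi).symm⟩
  -- the earlier neighbours of any vertex all lie in `Fin N`
  have hlift (j : Fin (N + 1)) (t : Finset (Fin N)) (ht : (K.comap Fin.castSucc).IsNClique k t)
      (htj : ∀ i ∈ t, i.castSucc < j)
      (hadj : ∀ i : Fin N, i.castSucc < j → (K.Adj i.castSucc j ↔ i ∈ t)) :
      ∃ s : Finset (Fin (N + 1)), s.card = k ∧ (∀ i ∈ s, i < j) ∧
        (∀ i, i < j → (K.Adj i j ↔ i ∈ s)) ∧ (∀ a ∈ s, ∀ b ∈ s, a ≠ b → K.Adj a b) := by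
    refine ⟨t.map Fin.castSuccEmb, by simp [ht.card_eq], by simpa using htj, fun i hi => ?_, ?_⟩
    · obtain ⟨i, rfl⟩ := hcast i (by have := j.isLt; rw [Fin.lt_def] at hi; omega)
      simpa using hadj i hi
    · simp only [mem_map, Fin.coe_castSuccEmb]
      rintro _ ⟨a, ha, rfl⟩ _ ⟨b, hb, rfl⟩ hab
      exact ht.isClique ha hb (fun h => hab (h ▸ rfl))
  refine ⟨by omega, fun i j hi hj hij => ?_, fun j hj => ?_⟩
  · obtain ⟨i, rfl⟩ := hcast i (by omega)
    obtain ⟨j, rfl⟩ := hcast j (by omega)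
    exact hfirst i j hi hj (fun h => hij (h ▸ rfl))
  · induction j using Fin.lastCases with
    | last => exact hlift _ s hs (fun i _ => Fin.castSucc_lt_last i) (fun i _ => hlast i)
    | cast j =>
      obtain ⟨t, ht, htj, hadj, htc⟩ := hlater j (by simpa using hj)
      exact hlift _ t ⟨fun a ha b hb hab => htc a ha b hb hab, ht⟩
        (fun i hi => Fin.castSucc_lt_castSucc_iff.2 (htj i hi))
        (fun i hi => hadj i (Fin.castSucc_lt_castSucc_iff.1 hi))

variable {k : ℕ} {H : SimpleGraph V}

theorem IsKTree.isKTreeOn {n : ℕ} {g : Fin n → V} (hH : IsKTree k n (H.comap g))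
    (hg : Function.Injective g) :
    IsKTreeOn k H (({i : Fin n | i < k + 1} : Finset _).image g) (univ.image g) := by
  obtain ⟨hkn, hfirst, hlater⟩ := hH
  suffices ∀ m, k + 1 ≤ m → m ≤ n →
      IsKTreeOn k H (({i : Fin n | i < k + 1} : Finset _).image g)
        (({i : Fin n | i < m} : Finset _).image g) by
    simpa using this n hkn le_rfl
  intro m hm
  induction m, hm using Nat.le_induction with
  | base =>
    intro _
    refine IsKTreeOn.clique ⟨?_, ?_⟩
    · simp only [coe_image, coe_filter]
      rintro _ ⟨i, hi, rfl⟩ _ ⟨j, hj, rfl⟩ hij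
      exact hfirst i j hi.2 hj.2 (fun h => hij (h ▸ rfl))
    · rw [card_image_of_injective _ hg, Fin.card_filter_val_lt]
      omega
  | succ m hkm ih =>
    intro hmn
    obtain ⟨s, hs, hsj, hadj, hsc⟩ := hlater ⟨m, hmn⟩ hkm
    have hset : ({i : Fin n | i < m + 1} : Finset _).image g =
        insert (g ⟨m, hmn⟩) (({i : Fin n | i < m} : Finset _).image g) := by
      rw [← image_insert]
      congr 1
      ext i
      simp [Fin.ext_iff]
      omega
    rw [hset]
    refine (ih (by omega)).addVertex (T := s.image g) ?_ ?_ ⟨?_, ?_⟩ ?_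
    · simp only [mem_image, mem_filter, mem_univ, true_and, hg.eq_iff, not_exists, not_and]
      exact fun i hi h => by rw [h] at hi; exact lt_irrefl _ hi
    · intro x hx
      obtain ⟨i, hi, rfl⟩ := mem_image.1 hx
      exact mem_image_of_mem g (mem_filter.2 ⟨mem_univ _, hsj i hi⟩)
    · simp only [coe_image]
      rintro _ ⟨a, ha, rfl⟩ _ ⟨b, hb, rfl⟩ hab
      exact hsc a ha b hb (fun h => hab (h ▸ rfl))
    · rw [card_image_of_injective _ hg, hs]
    · intro u hu
      obtain ⟨i, hi, rfl⟩ := mem_image.1 hu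
      rw [hg.mem_finset_image, H.adj_comm, ← hadj i (by simpa [Fin.lt_def] using hi)]
      rfl

theorem IsKTreeOn.exists_isKTree {C S : Finset V} (h : IsKTreeOn k H C S) :
    ∃ (N : ℕ) (g : Fin N → V), Function.Injective g ∧ Set.range g = S ∧
      IsKTree k N (H.comap g) := by
  induction h with
  | clique hC =>
    let e := C.equivFinOfCardEq hC.card_eq
    refine ⟨k + 1, fun i => e.symm i, Subtype.val_injective.comp e.symm.injective, ?_, le_rfl,
      fun i j _ _ hij => hC.isClique (e.symm i).2 (e.symm j).2 ?_, fun j hj => by omega⟩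
    · ext x
      simp only [Set.mem_range, mem_coe]
      exact ⟨by rintro ⟨i, rfl⟩; exact (e.symm i).2, fun hx => ⟨e ⟨x, hx⟩, by simp⟩⟩
    · exact fun h => hij (e.symm.injective (Subtype.ext h))
  | @addVertex S T v h hv hTS hT hadj ih =>
    obtain ⟨N, g, hg, hrange, hK⟩ := ih
    have hgS i : g i ∈ S := by rw [← mem_coe, ← hrange]; exact Set.mem_range_self i
    have hgv i : H.Adj (g i) v ↔ g i ∈ T := (H.adj_comm _ _).trans (hadj (g i) (hgS i))
    refine ⟨N + 1, Fin.snoc g v, Fin.snoc_injective_of_injective hg (by rwa [hrange]),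
      by rw [Fin.range_snoc, hrange, coe_insert], isKTree_of_comap_castSucc (s := {i | g i ∈ T})
        (by simpa using hK) ⟨?_, ?_⟩ (by simpa using hgv)⟩
    · simp only [comap_comap, Fin.snoc_comp_castSucc, coe_filter]
      intro a ha b hb hab
      exact hT.isClique ha.2 hb.2 (hg.ne hab)
    · rw [← hT.card_eq, ← card_image_of_injective _ hg]
      congr 1
      ext x
      simp only [mem_image, mem_filter, mem_univ, true_and]
      refine ⟨by rintro ⟨i, hi, rfl⟩; exact hi, fun hx => ?_⟩
      obtain ⟨i, rfl⟩ : x ∈ Set.range g := hrange ▸ hTS hx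
      exact ⟨i, hx, rfl⟩

end KTreeOn

namespace GlueVerts

variable {V₁ V₂ : Type} {m : ℕ} {r₁ : Fin m → V₁} {r₂ : Fin m → V₂}

theorem mk_eq_mk_iff (hr₁ : Function.Injective r₁) (hr₂ : Function.Injective r₂)
    {x y : V₁ ⊕ V₂} :
    (Quot.mk _ x : GlueVerts r₁ r₂) = Quot.mk _ y ↔ x = y ∨
      (∃ i, x = .inl (r₁ i) ∧ y = .inr (r₂ i)) ∨ ∃ i, y = .inl (r₁ i) ∧ x = .inr (r₂ i) := by
  refine ⟨fun h => ?_, ?_⟩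
  · have heqv : Equivalence fun x y : V₁ ⊕ V₂ => x = y ∨
        (∃ i, x = .inl (r₁ i) ∧ y = .inr (r₂ i)) ∨ ∃ i, y = .inl (r₁ i) ∧ x = .inr (r₂ i) := by
      refine ⟨fun x => Or.inl rfl, fun {x y} h => ?_, fun {x y z} hxy hyz => ?_⟩
      · rcases h with rfl | h | h
        exacts [Or.inl rfl, Or.inr (Or.inr h), Or.inr (Or.inl h)]
      · rcases hxy with rfl | ⟨i, rfl, rfl⟩ | ⟨i, rfl, rfl⟩ <;>
          rcases hyz with rfl | ⟨j, hj, rfl⟩ | ⟨j, rfl, hj⟩ <;>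
          simp_all [hr₁.eq_iff, hr₂.eq_iff]
    exact heqv.eqvGen_iff.1 ((Quot.eqvGen_exact h).mono fun x y h => Or.inr (Or.inl h))
  · rintro (rfl | ⟨i, rfl, rfl⟩ | ⟨i, rfl, rfl⟩)
    · rfl
    · exact Quot.sound ⟨i, rfl, rfl⟩
    · exact (Quot.sound ⟨i, rfl, rfl⟩).symm

theorem mk_inl_injective (hr₁ : Function.Injective r₁) (hr₂ : Function.Injective r₂) :
    Function.Injective fun a : V₁ => (Quot.mk _ (.inl a) : GlueVerts r₁ r₂) := fun a b h => by
  simpa using (mk_eq_mk_iff hr₁ hr₂).1 h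

theorem mk_inr_injective (hr₁ : Function.Injective r₁) (hr₂ : Function.Injective r₂) :
    Function.Injective fun b : V₂ => (Quot.mk _ (.inr b) : GlueVerts r₁ r₂) := fun a b h => by
  rcases (mk_eq_mk_iff hr₁ hr₂).1 h with h | ⟨i, h, -⟩ | ⟨i, h, -⟩ <;> simp_all

theorem mk_inl_eq_mk_inr_iff (hr₁ : Function.Injective r₁) (hr₂ : Function.Injective r₂)
    {a : V₁} {b : V₂} :
    (Quot.mk _ (.inl a) : GlueVerts r₁ r₂) = Quot.mk _ (.inr b) ↔
      ∃ i, r₁ i = a ∧ r₂ i = b := by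
  rw [mk_eq_mk_iff hr₁ hr₂]
  simp [eq_comm]

end GlueVerts

theorem injective_of_forall_adj {V : Type*} {H : SimpleGraph V} {m : ℕ} {r : Fin m → V}
    (hr : ∀ i j, i ≠ j → H.Adj (r i) (r j)) : Function.Injective r := fun i j h => by
  by_contra hij
  exact (hr i j hij).ne h

section Glue

variable {V₁ V₂ : Type} {m : ℕ} {G₁ : SimpleGraph V₁} {G₂ : SimpleGraph V₂}
  {r₁ : Fin m → V₁} {r₂ : Fin m → V₂}

open GlueVerts

theorem glue_adj_mk_inl_iff (hr₁ : ∀ i j, i ≠ j → G₁.Adj (r₁ i) (r₁ j))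
    (hr₂ : ∀ i j, i ≠ j → G₂.Adj (r₂ i) (r₂ j)) {a b : V₁} :
    (glue G₁ G₂ r₁ r₂).Adj (Quot.mk _ (.inl a)) (Quot.mk _ (.inl b)) ↔ G₁.Adj a b := by
  have hr₁' := injective_of_forall_adj hr₁
  have hr₂' := injective_of_forall_adj hr₂
  have hinj := mk_inl_injective hr₁' hr₂'
  refine ⟨?_, fun hab => ⟨fun h => hab.ne (hinj h), .inl a, .inl b, hab, rfl, rfl⟩⟩
  rintro ⟨-, (a' | a'), (b' | b'), hab, ha, hb⟩ <;> simp only [sumAdj] at hab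
  · rwa [← hinj ha, ← hinj hb]
  · obtain ⟨i, rfl, rfl⟩ := (mk_inl_eq_mk_inr_iff hr₁' hr₂').1 ha.symm
    obtain ⟨j, rfl, rfl⟩ := (mk_inl_eq_mk_inr_iff hr₁' hr₂').1 hb.symm
    exact hr₁ i j fun hij => hab.ne (hij ▸ rfl)

theorem glue_adj_mk_inr_iff (hr₁ : ∀ i j, i ≠ j → G₁.Adj (r₁ i) (r₁ j))
    (hr₂ : ∀ i j, i ≠ j → G₂.Adj (r₂ i) (r₂ j)) {a b : V₂} :
    (glue G₁ G₂ r₁ r₂).Adj (Quot.mk _ (.inr a)) (Quot.mk _ (.inr b)) ↔ G₂.Adj a b := by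
  have hr₁' := injective_of_forall_adj hr₁
  have hr₂' := injective_of_forall_adj hr₂
  have hinj := mk_inr_injective hr₁' hr₂'
  refine ⟨?_, fun hab => ⟨fun h => hab.ne (hinj h), .inr a, .inr b, hab, rfl, rfl⟩⟩
  rintro ⟨-, (a' | a'), (b' | b'), hab, ha, hb⟩ <;> simp only [sumAdj] at hab
  · obtain ⟨i, rfl, rfl⟩ := (mk_inl_eq_mk_inr_iff hr₁' hr₂').1 ha
    obtain ⟨j, rfl, rfl⟩ := (mk_inl_eq_mk_inr_iff hr₁' hr₂').1 hb
    exact hr₂ i j fun hij => hab.ne (hij ▸ rfl)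
  · rwa [← hinj ha, ← hinj hb]

theorem glue_adj_mk_inl_mk_inr (hr₁ : Function.Injective r₁) (hr₂ : Function.Injective r₂)
    {a : V₁} {b : V₂} (h : (glue G₁ G₂ r₁ r₂).Adj (Quot.mk _ (.inl a)) (Quot.mk _ (.inr b))) :
    a ∈ Set.range r₁ ∨ b ∈ Set.range r₂ := by
  obtain ⟨-, (a' | a'), (b' | b'), hab, ha, hb⟩ := h <;> simp only [sumAdj] at hab
  · obtain ⟨i, -, rfl⟩ := (mk_inl_eq_mk_inr_iff hr₁ hr₂).1 hb
    exact Or.inr ⟨i, rfl⟩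
  · obtain ⟨i, rfl, -⟩ := (mk_inl_eq_mk_inr_iff hr₁ hr₂).1 ha.symm
    exact Or.inl ⟨i, rfl⟩

theorem glue_isNClique_image_glueRoot [DecidableEq (GlueVerts r₁ r₂)]
    (hr₁ : ∀ i j, i ≠ j → G₁.Adj (r₁ i) (r₁ j)) (hr₂ : ∀ i j, i ≠ j → G₂.Adj (r₂ i) (r₂ j)) :
    (glue G₁ G₂ r₁ r₂).IsNClique m (univ.image (glueRoot r₁ r₂)) := by
  have hinj : Function.Injective (glueRoot r₁ r₂) :=
    (mk_inl_injective (injective_of_forall_adj hr₁) (injective_of_forall_adj hr₂)).comp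
      (injective_of_forall_adj hr₁)
  refine ⟨?_, by rw [card_image_of_injective _ hinj, card_univ, Fintype.card_fin]⟩
  intro x hx y hy hxy
  obtain ⟨i, -, rfl⟩ := mem_image.1 hx
  obtain ⟨j, -, rfl⟩ := mem_image.1 hy
  exact (glue_adj_mk_inl_iff hr₁ hr₂).2 (hr₁ i j fun h => hxy (h ▸ rfl))

def glueMap {W₁ W₂ : Type} (f₁ : V₁ → W₁) (f₂ : V₂ → W₂) :
    GlueVerts r₁ r₂ → GlueVerts (f₁ ∘ r₁) (f₂ ∘ r₂) :=
  Quot.map (Sum.map f₁ f₂) (by rintro _ _ ⟨i, rfl, rfl⟩; exact ⟨i, rfl, rfl⟩)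

variable {W₁ W₂ : Type} {f₁ : V₁ → W₁} {f₂ : V₂ → W₂}

theorem glueMap_injective (hf₁ : Function.Injective f₁) (hf₂ : Function.Injective f₂)
    (hr₁ : Function.Injective (f₁ ∘ r₁)) (hr₂ : Function.Injective (f₂ ∘ r₂)) :
    Function.Injective (glueMap f₁ f₂ : GlueVerts r₁ r₂ → _) := by
  rintro ⟨x⟩ ⟨y⟩ h
  obtain h | ⟨i, hx, hy⟩ | ⟨i, hy, hx⟩ := (mk_eq_mk_iff hr₁ hr₂).1 h
  · rw [Sum.map_injective.2 ⟨hf₁, hf₂⟩ h]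
  · cases x <;> cases y <;> simp [hf₁.eq_iff, hf₂.eq_iff] at hx hy
    subst hx hy
    exact Quot.sound ⟨i, rfl, rfl⟩
  · cases x <;> cases y <;> simp [hf₁.eq_iff, hf₂.eq_iff] at hx hy
    subst hx hy
    exact (Quot.sound ⟨i, rfl, rfl⟩).symm

theorem glue_adj_glueMap {H₁ : SimpleGraph W₁} {H₂ : SimpleGraph W₂}
    (hf₁ : ∀ u v, G₁.Adj u v → H₁.Adj (f₁ u) (f₁ v))
    (hf₂ : ∀ u v, G₂.Adj u v → H₂.Adj (f₂ u) (f₂ v))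
    (hinj : Function.Injective (glueMap f₁ f₂ : GlueVerts r₁ r₂ → _)) {x y : GlueVerts r₁ r₂}
    (h : (glue G₁ G₂ r₁ r₂).Adj x y) :
    (glue H₁ H₂ (f₁ ∘ r₁) (f₂ ∘ r₂)).Adj (glueMap f₁ f₂ x) (glueMap f₁ f₂ y) := by
  obtain ⟨hxy, a, b, hab, rfl, rfl⟩ := h
  refine ⟨hinj.ne hxy, Sum.map f₁ f₂ a, Sum.map f₁ f₂ b, ?_, rfl, rfl⟩
  rcases a with a | a <;> rcases b with b | b <;>
    simp only [sumAdj, Sum.map_inl, Sum.map_inr] at hab ⊢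
  exacts [hf₁ _ _ hab, hf₂ _ _ hab]

end Glue

open GlueVerts in
theorem exists_isKTreeOn_glue {k n₁ n₂ : ℕ} {H₁ : SimpleGraph (Fin n₁)}
    {H₂ : SimpleGraph (Fin n₂)} {R₁ : Fin (k + 1) → Fin n₁} {R₂ : Fin (k + 1) → Fin n₂}
    [DecidableEq (GlueVerts R₁ R₂)] (hH₁ : IsKTree k n₁ H₁) (hH₂ : IsKTree k n₂ H₂)
    (hR₁ : ∀ i j, i ≠ j → H₁.Adj (R₁ i) (R₁ j)) (hR₂ : ∀ i j, i ≠ j → H₂.Adj (R₂ i) (R₂ j)) :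
    ∃ D S, IsKTreeOn k (glue H₁ H₂ R₁ R₂) D S ∧ ∀ x, x ∈ S := by
  have hR₁inj := injective_of_forall_adj hR₁
  have hR₂inj := injective_of_forall_adj hR₂
  let ι₁ : Fin n₁ → GlueVerts R₁ R₂ := fun a => Quot.mk _ (.inl a)
  let ι₂ : Fin n₂ → GlueVerts R₁ R₂ := fun b => Quot.mk _ (.inr b)
  have hι₁ : Function.Injective ι₁ := mk_inl_injective hR₁inj hR₂inj
  have hι₂ : Function.Injective ι₂ := mk_inr_injective hR₁inj hR₂inj
  have hH₁ : IsKTree k n₁ ((glue H₁ H₂ R₁ R₂).comap ι₁) := by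
    convert hH₁
    ext a b
    exact glue_adj_mk_inl_iff hR₁ hR₂
  have hH₂ : IsKTree k n₂ ((glue H₁ H₂ R₁ R₂).comap ι₂) := by
    convert hH₂
    ext a b
    exact glue_adj_mk_inr_iff hR₁ hR₂
  set C := univ.image (glueRoot R₁ R₂)
  have hC₂ : C = univ.image (ι₂ ∘ R₂) := image_congr fun i _ => Quot.sound ⟨i, rfl, rfl⟩
  have hCι₁ : C ⊆ univ.image ι₁ := fun x hx => by
    obtain ⟨i, -, rfl⟩ := mem_image.1 hx
    exact mem_image_of_mem _ (mem_univ _)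
  have hCι₂ : C ⊆ univ.image ι₂ := fun x hx => by
    obtain ⟨i, -, rfl⟩ := mem_image.1 (hC₂ ▸ hx)
    exact mem_image_of_mem _ (mem_univ _)
  refine ⟨_, _, (hH₁.isKTreeOn hι₁).union
    ((hH₂.isKTreeOn hι₂).reroot hCι₂ (glue_isNClique_image_glueRoot hR₁ hR₂)) hCι₁ ?_ ?_,
    Quot.ind ?_⟩
  · simp only [mem_image, mem_univ, true_and, forall_exists_index]
    rintro _ a rfl b hab
    obtain ⟨i, rfl, -⟩ := (mk_inl_eq_mk_inr_iff hR₁inj hR₂inj).1 hab.symm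
    exact mem_image_of_mem _ (mem_univ i)
  · simp only [mem_image, mem_univ, true_and, forall_exists_index]
    rintro _ a rfl _ b rfl ha hb hab
    rcases glue_adj_mk_inl_mk_inr hR₁inj hR₂inj hab with ⟨i, rfl⟩ | ⟨i, rfl⟩
    · exact ha (mem_image_of_mem _ (mem_univ i))
    · exact hb (hC₂ ▸ mem_image_of_mem _ (mem_univ i))
  · rintro (a | b)
    · exact mem_union_left _ (mem_image_of_mem ι₁ (mem_univ a))
    · exact mem_union_right _ (mem_image_of_mem ι₂ (mem_univ b))

theorem isRootedPartialKTree_glue {k : ℕ} {V₁ V₂ : Type} {G₁ : SimpleGraph V₁}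
    {G₂ : SimpleGraph V₂} {r₁ : Fin (k + 1) → V₁} {r₂ : Fin (k + 1) → V₂}
    (h₁ : IsRootedPartialKTree k G₁ r₁) (h₂ : IsRootedPartialKTree k G₂ r₂) :
    IsRootedPartialKTree k (glue G₁ G₂ r₁ r₂) (glueRoot r₁ r₂) := by
  classical
  obtain ⟨n₁, H₁, hH₁, f₁, hf₁, hr₁⟩ := h₁
  obtain ⟨n₂, H₂, hH₂, f₂, hf₂, hr₂⟩ := h₂
  obtain ⟨D, S, hD, hS⟩ := exists_isKTreeOn_glue (R₁ := f₁ ∘ r₁) (R₂ := f₂ ∘ r₂) hH₁ hH₂ hr₁ hr₂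
  obtain ⟨N, g, hg, hrange, hK⟩ := hD.exists_isKTree
  let e := Equiv.ofBijective g ⟨hg, fun x => (hrange.symm ▸ mem_coe.2 (hS x) : x ∈ Set.range g)⟩
  have hinj := glueMap_injective f₁.injective f₂.injective (injective_of_forall_adj hr₁)
    (injective_of_forall_adj hr₂) (r₁ := r₁) (r₂ := r₂)
  refine ⟨N, _, hK, ⟨e.symm ∘ glueMap f₁ f₂, e.symm.injective.comp hinj⟩, fun x y hxy => ?_,
    fun i j hij => ?_⟩
  · change (glue H₁ H₂ _ _).Adj (e (e.symm _)) (e (e.symm _))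
    simpa only [e.apply_symm_apply] using glue_adj_glueMap hf₁ hf₂ hinj hxy
  · change (glue H₁ H₂ _ _).Adj (e (e.symm _)) (e (e.symm _))
    rw [e.apply_symm_apply, e.apply_symm_apply]
    exact (glue_adj_mk_inl_iff hr₁ hr₂).2 (hr₁ i j hij)

/-- Let `G¹` and `G²` be bipartite rooted partial `k`-trees with types `M¹`
and `M²` such that some bipartite type `M⁰` satisfies `M⁰ ⪯ M¹` and `M⁰ ⪯ M²`. Then `M¹` and
`M²` are compatible, `G¹ ⊕ G²` is a bipartite rooted partial `k`-tree, and its type `M`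
satisfies `M⁰ ⪯ M`. -/
theorem stmt7 (k : ℕ) (V₁ V₂ : Type) (G₁ : SimpleGraph V₁) (G₂ : SimpleGraph V₂)
    (r₁ : Fin (k + 1) → V₁) (r₂ : Fin (k + 1) → V₂)
    (h₁ : IsRootedPartialKTree k G₁ r₁) (hb₁ : G₁.Colorable 2)
    (h₂ : IsRootedPartialKTree k G₂ r₂) (hb₂ : G₂.Colorable 2)
    (M₀ : Fin (k + 1) → Fin (k + 1) → ℕ∞) (hM₀ : IsBipartiteType M₀)
    (hle₁ : TypeLE M₀ (typeOf G₁ r₁)) (hle₂ : TypeLE M₀ (typeOf G₂ r₂)) :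
    CompatibleTypes (typeOf G₁ r₁) (typeOf G₂ r₂) ∧
    IsRootedPartialKTree k (glue G₁ G₂ r₁ r₂) (glueRoot r₁ r₂) ∧
    (glue G₁ G₂ r₁ r₂).Colorable 2 ∧
    TypeLE M₀ (typeOf (glue G₁ G₂ r₁ r₂) (glueRoot r₁ r₂)) := by
  have h2 : 2 ≤ Fintype.card (ZMod 2) := by simp
  obtain ⟨d, hd⟩ := hM₀.exists_isParityPotential
  have hd₁ := hd.of_typeLE hle₁
  have hd₂ := hd.of_typeLE hle₂
  obtain ⟨c₁, hc₁⟩ := (hb₁.toColoring h2).exists_eq_of_isParityPotential hd₁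
  obtain ⟨c₂, hc₂⟩ := (hb₂.toColoring h2).exists_eq_of_isParityPotential hd₂
  let c := glueColoring c₁ c₂ fun i => (hc₁ i).trans (hc₂ i).symm
  have hd' : IsParityPotential (typeOf (glue G₁ G₂ r₁ r₂) (glueRoot r₁ r₂)) d :=
    (funext hc₁ : ⇑c ∘ glueRoot r₁ r₂ = d) ▸ c.isParityPotential_typeOf (glueRoot r₁ r₂)
  exact ⟨hd₁.compatibleTypes hd₂, isRootedPartialKTree_glue h₁ h₂, by simpa using c.colorable,
    hd.compatibleTypes hd', typeOf_glue_ge hM₀.1 hle₁.2 hle₂.2⟩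
end

section
/- Every finite graph in which every vertex has even degree and which has an odd number of edges contains a cycle of odd length. -/
open SimpleGraph

/-!
If every closed walk has even length, then `G` is bipartite, and with a bipartition `(s, t)`
every edge has exactly one end in `s`, so the number of edges is `∑ v ∈ s, deg v`, which is
even when all degrees are. So an odd number of edges yields a closed walk of odd length, and a
shortest one is a cycle: a closed walk whose tail is not a path contains a nontrivial closed
subwalk, and cutting it out splits the walk into two shorter closed walks, one of odd length.
-/

namespace SimpleGraph

variable {V : Type*} {G : SimpleGraph V}

namespace Walk

lemma three_le_length_of_odd_length {u : V} {w : G.Walk u u} (hw : Odd w.length) :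
    3 ≤ w.length := by
  have h0 : w.length ≠ 0 := fun h => Nat.not_odd_zero (h ▸ hw)
  have h1 : w.length ≠ 1 := fun h => G.loopless.irrefl u (adj_of_length_eq_one h)
  have h2 : w.length ≠ 2 := fun h => Nat.not_odd_iff_even.mpr even_two (h ▸ hw)
  omega

theorem exists_isCycle_odd_length {u : V} (w : G.Walk u u) (hw : Odd w.length) :
    ∃ (x : V) (c : G.Walk x x), c.IsCycle ∧ Odd c.length := by
  induction hn : w.length using Nat.strong_induction_on generalizing u with
  | _ n ih =>
  subst hn
  by_cases hpath : w.tail.IsPath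
  · exact ⟨u, w, isCycle_iff_isPath_tail_and_le_length.mpr
      ⟨hpath, three_le_length_of_odd_length hw⟩, hw⟩
  obtain ⟨x, c, hc, hc_nil⟩ : ∃ (x : V) (c : G.Walk x x), c.IsSubwalk w.tail ∧ ¬c.Nil := by
    simpa [isPath_iff_isSubwalk_imp_nil] using hpath
  obtain ⟨ru, rv, hw_eq⟩ := hc.trans (isSubwalk_drop w 1)
  have hc_pos : 0 < c.length := not_nil_iff_lt_length.mp hc_nil
  have hc_lt : c.length < w.length := by
    have := length_le_of_isSubwalk hc
    rw [length_tail] at this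
    omega
  have hcut_len : (ru.append rv).length = w.length - c.length := by
    rw [hw_eq, length_append, length_append, length_append]
    omega
  rcases Nat.even_or_odd c.length with hc_even | hc_odd
  · refine ih _ (by omega) (ru.append rv) ?_ rfl
    rw [hcut_len]
    exact Nat.Odd.sub_even hc_lt.le hw hc_even
  · exact ih _ hc_lt c hc_odd rfl

end Walk

theorem exists_isCycle_odd_length_of_not_isBipartite (hG : ¬G.IsBipartite) :
    ∃ (u : V) (c : G.Walk u u), c.IsCycle ∧ Odd c.length := by
  obtain ⟨u, w, hw⟩ : ∃ (u : V) (w : G.Walk u u), ¬Even w.length := by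
    simpa [two_colorable_iff_forall_loop_even] using hG
  exact w.exists_isCycle_odd_length (Nat.not_even_iff_odd.mp hw)

theorem IsBipartite.even_card_edgeFinset [Fintype V] [DecidableRel G.Adj] (hG : G.IsBipartite)
    (hdeg : ∀ v, Even (G.degree v)) : Even G.edgeFinset.card := by
  classical
  obtain ⟨s, t, hst⟩ := hG.exists_isBipartiteWith
  have hst' : G.IsBipartiteWith ↑s.toFinset ↑t.toFinset := by simpa using hst
  rw [← isBipartiteWith_sum_degrees_eq_card_edges hst']
  exact Finset.even_sum _ fun v _ => hdeg v

end SimpleGraph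

theorem stmt12_general (V : Type) [Fintype V] (G : SimpleGraph V)
    [DecidableRel G.Adj] (hdeg : ∀ v : V, Even (G.degree v))
    (hodd : Odd G.edgeFinset.card) :
    ∃ (u : V) (w : G.Walk u u), w.IsCycle ∧ Odd w.length :=
  SimpleGraph.exists_isCycle_odd_length_of_not_isBipartite fun hG =>
    Nat.not_even_iff_odd.mpr hodd (hG.even_card_edgeFinset hdeg)

/-- Every finite graph in which every vertex has even degree and which has
an odd number of edges contains a cycle of odd length. -/
theorem stmt12 (V : Type) [Fintype V] [DecidableEq V] (G : SimpleGraph V)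
    [DecidableRel G.Adj] (hdeg : ∀ v : V, Even (G.degree v))
    (hodd : Odd G.edgeFinset.card) :
    ∃ (u : V) (w : G.Walk u u), w.IsCycle ∧ Odd w.length :=
  stmt12_general V G hdeg hodd
end
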